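/- arXiv:2108.08177 — 5 statements merged into one kernel-verified Lean document; each statement's English description precedes it below -/
import Mathlib

section
/- Let n ≥ 3 be an integer and let S ⊆ V(Q_n) with |S| = k and Type(S) = t, where 0 < 2t ≤ k ≤ 2^{n−1} and 1/24 ≤ t/2^n ≤ 1/24 + 7/64. Then θ(n,S) ≥ 2^n · f(k/2^n), where f(x) = 3/4 − (64/7)(x − 1/2)^2. -/
open Finset

/-- Two vertices of the hypercube `Q_n` are adjacent iff they differ in exactly one
coordinate. -/
def cubeEdge {n : ℕ} (u v : Fin n → Bool) : Prop :=
  (Finset.univ.filter (fun i => u i ≠ v i)).card = 1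

instance {n : ℕ} (u v : Fin n → Bool) : Decidable (cubeEdge u v) := by
  unfold cubeEdge; infer_instance

/-- `θ(n,S)`: the number of edges of `Q_n` with exactly one endpoint in `S`. -/
def edgeBoundary (n : ℕ) (S : Finset (Fin n → Bool)) : ℕ :=
  (Finset.univ.filter (fun p : (Fin n → Bool) × (Fin n → Bool) =>
    p.1 ∈ S ∧ p.2 ∉ S ∧ cubeEdge p.1 p.2)).card

/-- `θ(n,k) = min {θ(n,S) : S ⊆ V(Q_n), |S| = k}`. -/
noncomputable def thetaMin (n k : ℕ) : ℕ :=
  sInf {m | ∃ S : Finset (Fin n → Bool), S.card = k ∧ edgeBoundary n S = m}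

/-- The half plane `{x : x_i = a}` of `Q_n`. -/
def halfPlane (n : ℕ) (i : Fin n) (a : Bool) : Finset (Fin n → Bool) :=
  Finset.univ.filter (fun x => x i = a)

/-- `Type(S) = min_H |S ∩ H|`, minimum over the `2n` half planes of `Q_n`. -/
noncomputable def typeOf (n : ℕ) (S : Finset (Fin n → Bool)) : ℕ :=
  sInf {m | ∃ (i : Fin n) (a : Bool), (S ∩ halfPlane n i a).card = m}

/-- `θ(n,k,t) = min {θ(n,S) : |S| = k, Type(S) = t}`. -/
noncomputable def thetaMinType (n k t : ℕ) : ℕ :=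
  sInf {m | ∃ S : Finset (Fin n → Bool),
    S.card = k ∧ typeOf n S = t ∧ edgeBoundary n S = m}

/-- Graph distance on the cycle `C_m` with vertices labelled by naturals. -/
def cycleDist (m a b : ℕ) : ℕ := min (Nat.dist a b) (m - Nat.dist a b)

/-- The wirelength of an embedding `η` of `Q_n` into the cycle `C_{2^n}`:
the sum of cycle distances over all (unordered) edges of `Q_n`.  (The sum over
ordered pairs counts every edge twice, whence the division by `2`.) -/
def wirelength (n : ℕ) (η : (Fin n → Bool) → ℕ) : ℕ :=
  ((Finset.univ.filter (fun p : (Fin n → Bool) × (Fin n → Bool) =>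
    cubeEdge p.1 p.2)).sum (fun p => cycleDist (2^n) (η p.1) (η p.2))) / 2

/-- The reflected Gray code embedding `ξ_n(x) = (y)_2 + 1`, where
`y_i = (x_1 + ⋯ + x_i) mod 2`. -/
def xi (n : ℕ) (x : Fin n → Bool) : ℕ :=
  (Finset.univ.sum (fun i : Fin n =>
    ((Finset.univ.filter (fun j : Fin n => j ≤ i ∧ x j = true)).card % 2)
      * 2 ^ (n - 1 - (i : ℕ)))) + 1

/-- `f(x) = 3/4 − (64/7)(x − 1/2)²`. -/
noncomputable def fGuu (x : ℝ) : ℝ := 3/4 - 64/7 * (x - 1/2)^2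

/-- `takDelta i` is `Δ_{i+1}`: `Δ_1(x) = 1/2 − |x − 1/2|`,
`Δ_{n}(x) = (1/2)Δ_{n−1}(2x − ⌊2x⌋)`. -/
noncomputable def takDelta : ℕ → ℝ → ℝ
  | 0, x => 1/2 - |x - 1/2|
  | n+1, x => takDelta n (2*x - (⌊2*x⌋ : ℝ)) / 2

/-- `m_n(x) = Σ_{i=1}^n Δ_i(x)`, the n-th partial sum of the Takagi function. -/
noncomputable def mTakagi (n : ℕ) (x : ℝ) : ℝ := ∑ i ∈ Finset.range n, takDelta i x

/-- `y_N = ⌈2^N/24⌉ / 2^N`. -/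
noncomputable def yGuu (N : ℕ) : ℝ := (⌈(2^N : ℝ)/24⌉ : ℝ) / 2^N

/-- `p_N = 1/2 − y_N`. -/
noncomputable def pGuu (N : ℕ) : ℝ := 1/2 - yGuu N

/-- `g_{n,i,a}^{-1}(S)`, where `g_{n,i,a}` inserts the letter `a` at position `i`. -/
def gPre (n : ℕ) (i : Fin (n+1)) (a : Bool) (S : Finset (Fin (n+1) → Bool)) :
    Finset (Fin n → Bool) :=
  Finset.univ.filter (fun x => i.insertNth a x ∈ S)

/-!
Split `S` along a half plane `x_i = a` realising `Type(S) = t`. The two slices, read in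
`Q_{n-1}`, have `t` and `k - t` elements, and the edges in direction `i` add at least `k - 2t`
to `θ(n,S)`. By Hart's theorem a slice of size `s` has edge boundary at least `hart (n-1) s`,
and `hart m s = 2^m τ(s / 2^m)` for the Takagi function `τ`. The self-similarity
`τ(x) = x + τ(2x)/2` (for `x ≤ 1/2`) and the symmetry `τ(1-x) = τ(x)` give an explicit
piecewise-linear minorant of `τ` on `[0, 1/2]`, and on each of its cells the claimed inequality
is linear once the square in `f` is replaced by a tangent line.
-/

section Slices

variable {n : ℕ}

lemma mem_gPre {i : Fin (n + 1)} {a : Bool} {S : Finset (Fin (n + 1) → Bool)}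
    {x : Fin n → Bool} : x ∈ gPre n i a S ↔ i.insertNth a x ∈ S := by
  simp [gPre]

lemma card_insertNth_ne (i : Fin (n + 1)) (a b : Bool) (x y : Fin n → Bool) :
    #{j | (i.insertNth a x : Fin (n + 1) → Bool) j ≠ (i.insertNth b y : Fin (n + 1) → Bool) j}
      = (if a ≠ b then 1 else 0) + #{j | x j ≠ y j} := by
  simp only [card_filter, Fin.sum_univ_succAbove _ i, Fin.insertNth_apply_same,
    Fin.insertNth_apply_succAbove]

lemma cubeEdge_insertNth_iff (i : Fin (n + 1)) (a : Bool) (x y : Fin n → Bool) :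
    cubeEdge (i.insertNth a x) (i.insertNth a y) ↔ cubeEdge x y := by
  simp [cubeEdge, card_insertNth_ne]

lemma cubeEdge_insertNth_of_ne (i : Fin (n + 1)) {a b : Bool} (hab : a ≠ b) (x : Fin n → Bool) :
    cubeEdge (i.insertNth a x) (i.insertNth b x) := by
  simp [cubeEdge, card_insertNth_ne, hab]

lemma card_gPre (i : Fin (n + 1)) (a : Bool) (S : Finset (Fin (n + 1) → Bool)) :
    #(gPre n i a S) = #(S ∩ halfPlane (n + 1) i a) := by
  refine card_bij (fun x _ => i.insertNth a x) (fun x hx => ?_)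
    (fun x _ y _ h => Fin.insertNth_right_injective (α := fun _ => Bool) a h) (fun z hz => ?_)
  · simp [mem_gPre.mp hx, halfPlane]
  · simp only [mem_inter, halfPlane, mem_filter, mem_univ, true_and] at hz
    refine ⟨i.removeNth z, ?_, ?_⟩
    · rw [mem_gPre, ← hz.2, Fin.insertNth_self_removeNth]
      exact hz.1
    · rw [← hz.2, Fin.insertNth_self_removeNth]

lemma card_gPre_false_add_true (i : Fin (n + 1)) (S : Finset (Fin (n + 1) → Bool)) :
    #(gPre n i false S) + #(gPre n i true S) = #S := by
  rw [card_gPre, card_gPre, ← card_union_of_disjoint]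
  · congr 1; ext z; cases h : z i <;> simp [halfPlane, h]
  · exact disjoint_left.2 fun z h₁ h₂ => by simp_all [halfPlane]

lemma edgeBoundary_gPre_add_le (i : Fin (n + 1)) (S : Finset (Fin (n + 1) → Bool)) :
    edgeBoundary n (gPre n i false S) + edgeBoundary n (gPre n i true S)
      + Nat.dist #(gPre n i false S) #(gPre n i true S) ≤ edgeBoundary (n + 1) S := by
  set E : Finset ((Fin (n + 1) → Bool) × (Fin (n + 1) → Bool)) :=
    {p | p.1 ∈ S ∧ p.2 ∉ S ∧ cubeEdge p.1 p.2}
  have hE : edgeBoundary (n + 1) S = ∑ ab : Bool × Bool, #{p ∈ E | (p.1 i, p.2 i) = ab} :=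
    card_eq_sum_card_fiberwise fun _ _ => mem_univ _
  have inside (a : Bool) :
      edgeBoundary n (gPre n i a S) ≤ #{p ∈ E | (p.1 i, p.2 i) = (a, a)} := by
    refine card_le_card_of_injOn (fun p => (i.insertNth a p.1, i.insertNth a p.2)) ?_ ?_
    · intro p hp
      simp only [coe_filter, mem_univ, true_and, Set.mem_ofPred_eq, mem_gPre] at hp
      simp [E, hp.1, hp.2.1, (cubeEdge_insertNth_iff i a _ _).2 hp.2.2]
    · intro p _ q _ h
      simp only [Prod.mk.injEq, Fin.insertNth_inj, true_and] at h
      exact Prod.ext h.1 h.2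
  have across {a b : Bool} (hab : a ≠ b) :
      #(gPre n i a S \ gPre n i b S) ≤ #{p ∈ E | (p.1 i, p.2 i) = (a, b)} := by
    refine card_le_card_of_injOn (fun x => (i.insertNth a x, i.insertNth b x)) ?_ ?_
    · intro x hx
      simp only [coe_sdiff, Set.mem_sdiff, mem_coe, mem_gPre] at hx
      simp [E, hx.1, hx.2, cubeEdge_insertNth_of_ne i hab x]
    · intro x _ y _ h
      simp only [Prod.mk.injEq, Fin.insertNth_inj, true_and] at h
      exact h.1
  have hdist : Nat.dist #(gPre n i false S) #(gPre n i true S)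
      ≤ #(gPre n i false S \ gPre n i true S) + #(gPre n i true S \ gPre n i false S) := by
    have := le_card_sdiff (gPre n i true S) (gPre n i false S)
    have := le_card_sdiff (gPre n i false S) (gPre n i true S)
    simp only [Nat.dist]
    omega
  rw [hE, Fintype.sum_prod_type, Fintype.sum_bool, Fintype.sum_bool, Fintype.sum_bool]
  have := inside false
  have := inside true
  have := across (a := false) (b := true) (by decide)
  have := across (a := true) (b := false) (by decide)
  omega

end Slices

section Hart

def hart (m s : ℕ) : ℕ :=
  ∑ i ∈ range m, min (s % 2 ^ (i + 1)) (2 ^ (i + 1) - s % 2 ^ (i + 1))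

@[simp] lemma hart_zero (s : ℕ) : hart 0 s = 0 := rfl

lemma hart_succ_two_mul (n c : ℕ) : hart (n + 1) (2 * c) = 2 * hart n c := by
  rw [hart, sum_range_succ', hart, mul_sum]
  simp only [zero_add, pow_one, Nat.mul_mod_right, Nat.sub_zero, Nat.zero_min, add_zero]
  refine sum_congr rfl fun i _ => ?_
  rw [pow_succ 2 (i + 1), mul_comm _ 2, Nat.mul_mod_mul_left]
  have := Nat.mod_lt c (Nat.two_pow_pos (i + 1))
  omega

lemma hart_succ_two_mul_add_one (n c : ℕ) :
    hart (n + 1) (2 * c + 1) = 1 + hart n c + hart n (c + 1) := by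
  rw [hart, sum_range_succ', hart, hart, add_assoc 1, ← sum_add_distrib]
  simp only [zero_add, pow_one, Nat.mul_add_mod, Nat.one_mod, Nat.reduceSub, Nat.min_self]
  rw [add_comm]
  congr 1
  refine sum_congr rfl fun i _ => ?_
  set d := 2 ^ (i + 1)
  have hr : c % d < d := Nat.mod_lt _ (Nat.two_pow_pos _)
  have hodd : (2 * c + 1) % (2 * d) = 2 * (c % d) + 1 := by
    rw [← Nat.mod_add_div c d, mul_add, add_right_comm, ← mul_assoc, mul_comm 2 d,
      Nat.add_mul_mod_self_left, Nat.mod_eq_of_lt (by omega), Nat.mod_add_div]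
  have hsucc : (c + 1) % d = if c % d + 1 = d then 0 else c % d + 1 := by
    rw [Nat.add_mod, Nat.one_mod_eq_one.2 (by simp [d])]
    split_ifs with h
    · rw [h, Nat.mod_self]
    · exact Nat.mod_eq_of_lt (by omega)
  rw [pow_succ 2 (i + 1), mul_comm _ 2, hodd, hsucc]
  split_ifs <;> omega

lemma hart_succ_add_le (n : ℕ) :
    ∀ a b, hart (n + 1) (a + b) ≤ hart n a + hart n b + Nat.dist a b := by
  induction n with
  | zero =>
    intro a b
    simp only [hart, range_one, sum_singleton, zero_add, pow_one, Nat.dist]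
    omega
  | succ n ih =>
    intro a b
    obtain ⟨a, rfl | rfl⟩ := Nat.even_or_odd' a <;>
      obtain ⟨b, rfl | rfl⟩ := Nat.even_or_odd' b
    · rw [← mul_add, hart_succ_two_mul, hart_succ_two_mul, hart_succ_two_mul]
      have := ih a b
      simp only [Nat.dist] at *
      omega
    · rw [show 2 * a + (2 * b + 1) = 2 * (a + b) + 1 by ring, hart_succ_two_mul_add_one,
        hart_succ_two_mul, hart_succ_two_mul_add_one]
      have := ih a b
      have := ih a (b + 1)
      simp only [Nat.dist, ← add_assoc] at *
      omega
    · rw [show 2 * a + 1 + 2 * b = 2 * (a + b) + 1 by ring, hart_succ_two_mul_add_one,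
        hart_succ_two_mul, hart_succ_two_mul_add_one]
      have := ih a b
      have := ih (a + 1) b
      simp only [Nat.dist, add_right_comm a 1 b] at *
      omega
    · rw [show 2 * a + 1 + (2 * b + 1) = 2 * (a + b + 1) by ring, hart_succ_two_mul,
        hart_succ_two_mul_add_one, hart_succ_two_mul_add_one]
      have := ih a (b + 1)
      have := ih (a + 1) b
      simp only [Nat.dist, ← add_assoc, add_right_comm a 1 b] at *
      omega

theorem hart_card_le_edgeBoundary (n : ℕ) (S : Finset (Fin n → Bool)) :
    hart n #S ≤ edgeBoundary n S := by
  induction n with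
  | zero => simp
  | succ n ih =>
    have := hart_succ_add_le n #(gPre n 0 false S) #(gPre n 0 true S)
    rw [card_gPre_false_add_true] at this
    have := edgeBoundary_gPre_add_le 0 S
    have := ih (gPre n 0 false S)
    have := ih (gPre n 0 true S)
    omega

end Hart

section SelfSimilarity

variable {m s : ℕ}

lemma hart_succ_of_le (h : s ≤ 2 ^ m) : hart (m + 1) s = s + hart m s := by
  have hlt : s < 2 ^ (m + 1) := by rw [pow_succ]; have := Nat.two_pow_pos m; omega
  rw [hart, sum_range_succ, ← hart, Nat.mod_eq_of_lt hlt]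
  omega

lemma hart_sub_two_pow (h : 2 ^ m ≤ s) : hart m (s - 2 ^ m) = hart m s := by
  refine sum_congr rfl fun i hi => ?_
  obtain ⟨c, hc⟩ : 2 ^ (i + 1) ∣ 2 ^ m := pow_dvd_pow 2 (mem_range.1 hi)
  have hmod : (s - 2 ^ m) % 2 ^ (i + 1) = s % 2 ^ (i + 1) := by
    have hs : s = (s - 2 ^ m) + 2 ^ (i + 1) * c := by omega
    conv_rhs => rw [hs, Nat.add_mul_mod_self_left]
  rw [hmod]

lemma hart_succ_of_ge (h₁ : 2 ^ m ≤ s) (h₂ : s ≤ 2 ^ (m + 1)) :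
    hart (m + 1) s = (2 ^ (m + 1) - s) + hart m (s - 2 ^ m) := by
  rw [hart, sum_range_succ, ← hart, hart_sub_two_pow h₁, add_comm]
  rcases h₂.eq_or_lt with rfl | hlt
  · simp
  · rw [Nat.mod_eq_of_lt hlt]
    omega

lemma hart_two_pow_sub (h : s ≤ 2 ^ m) : hart m (2 ^ m - s) = hart m s := by
  refine sum_congr rfl fun i hi => ?_
  have h₁ := Nat.mod_lt (2 ^ m - s) (Nat.two_pow_pos (i + 1))
  have h₂ := Nat.mod_lt s (Nat.two_pow_pos (i + 1))
  set d := 2 ^ (i + 1)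
  have hd : d ∣ (2 ^ m - s) % d + s % d := by
    rw [Nat.dvd_iff_mod_eq_zero, ← Nat.add_mod, Nat.sub_add_cancel h, ← Nat.dvd_iff_mod_eq_zero]
    exact pow_dvd_pow 2 (mem_range.1 hi)
  obtain ⟨c, hc⟩ := hd
  have hc : c < 2 := by
    by_contra! hc
    have := Nat.mul_le_mul_left d hc
    omega
  interval_cases c <;> omega

end SelfSimilarity

section LowerBounds

lemma le_hart_and_two_mul_le_hart (m : ℕ) :
    (∀ s, 3 * s ≤ 2 ^ (m + 1) → s ≤ hart m s) ∧
      (∀ s, 3 * s ≤ 2 ^ m → 2 * s ≤ hart m s) := by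
  induction m with
  | zero => constructor <;> intro s h <;> simp only [hart_zero] <;> omega
  | succ m ih =>
    have hpow : 2 ^ (m + 1) = 2 * 2 ^ m := by ring
    refine ⟨fun s h => ?_, fun s h => ?_⟩
    · rcases le_total s (2 ^ m) with hs | hs
      · rw [hart_succ_of_le hs]
        omega
      · rw [hart_succ_of_ge hs (by omega)]
        have := ih.2 (s - 2 ^ m) (by omega)
        omega
    · rw [hart_succ_of_le (by omega)]
      have := ih.1 s (by omega)
      omega

lemma two_mul_le_hart {m s : ℕ} (h : 3 * s ≤ 2 ^ m) : 2 * s ≤ hart m s :=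
  (le_hart_and_two_mul_le_hart m).2 s h

lemma three_mul_le_hart {m s : ℕ} (h : 8 * s ≤ 2 ^ m) : 3 * s ≤ hart m s := by
  rcases m with _ | m
  · omega
  · rw [hart_succ_of_le (by omega)]
    have := two_mul_le_hart (m := m) (s := s) (by omega)
    omega

lemma two_pow_le_hart_add_self {m s : ℕ} (h₁ : 2 ^ m ≤ 3 * s) (h₂ : s ≤ 2 ^ m) :
    2 ^ m ≤ hart m s + s := by
  rcases m with _ | m
  · omega
  · have hpow : 2 ^ (m + 1) = 2 * 2 ^ m := by ring
    rcases le_total s (2 ^ m) with hs | hs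
    · rw [hart_succ_of_le hs, ← hart_two_pow_sub hs]
      have := two_mul_le_hart (m := m) (s := 2 ^ m - s) (by omega)
      omega
    · rw [hart_succ_of_ge hs h₂]
      omega

lemma two_pow_le_two_mul_hart {m s : ℕ} (h₁ : 2 ^ m ≤ 6 * s) (h₂ : 6 * s ≤ 5 * 2 ^ m) :
    2 ^ m ≤ 2 * hart m s := by
  have lower_half (s : ℕ) (h₁ : 2 ^ m ≤ 6 * s) (h₂ : 2 * s ≤ 2 ^ m) :
      2 ^ m ≤ 2 * hart m s := by
    rcases m with _ | m
    · omega
    · have hpow : 2 ^ (m + 1) = 2 * 2 ^ m := by ring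
      rw [hart_succ_of_le (by omega)]
      have := two_pow_le_hart_add_self (m := m) (s := s) (by omega) (by omega)
      omega
  rcases le_total (2 * s) (2 ^ m) with hs | hs
  · exact lower_half s h₁ hs
  · rw [← hart_two_pow_sub (by omega)]
    exact lower_half _ (by omega) (by omega)

lemma four_mul_add_two_pow_le_four_mul_hart {m s : ℕ} (h₁ : 2 ^ m ≤ 12 * s)
    (h₂ : 12 * s ≤ 5 * 2 ^ m) : 4 * s + 2 ^ m ≤ 4 * hart m s := by
  rcases m with _ | m
  · omega
  · have hpow : 2 ^ (m + 1) = 2 * 2 ^ m := by ring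
    rw [hart_succ_of_le (by omega)]
    have := two_pow_le_two_mul_hart (m := m) (s := s) (by omega) (by omega)
    omega

lemma sixty_four_mul_add_two_pow_le_thirty_two_mul_hart {m s : ℕ} (h₁ : 9 * 2 ^ m ≤ 32 * s)
    (h₂ : 96 * s ≤ 29 * 2 ^ m) : 64 * s + 2 ^ m ≤ 32 * hart m s := by
  rcases lt_or_ge m 3 with hm | hm
  · interval_cases m <;> omega
  · obtain ⟨m, rfl⟩ := Nat.exists_eq_add_of_le' hm
    have hpow : 2 ^ (m + 3) = 8 * 2 ^ m := by ring
    have hpow' : 2 ^ (m + 2) = 4 * 2 ^ m := by ring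
    have hpow'' : 2 ^ (m + 1) = 2 * 2 ^ m := by ring
    rw [hart_succ_of_le (by omega), hart_succ_of_ge (by omega) (by omega),
      hart_succ_of_le (by omega)]
    have := four_mul_add_two_pow_le_four_mul_hart (m := m) (s := s - 2 ^ (m + 1)) (by omega)
      (by omega)
    omega

lemma five_mul_two_pow_le_eight_mul_hart {m s : ℕ} (h₁ : 3 * 2 ^ m ≤ 8 * s)
    (h₂ : 16 * s ≤ 7 * 2 ^ m) : 5 * 2 ^ m ≤ 8 * hart m s := by
  rcases m with _ | m
  · omega
  · have hpow : 2 ^ (m + 1) = 2 * 2 ^ m := by ring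
    rw [hart_succ_of_le (by omega), ← hart_two_pow_sub (m := m) (by omega)]
    have := four_mul_add_two_pow_le_four_mul_hart (m := m) (s := 2 ^ m - s) (by omega) (by omega)
    omega

lemma three_mul_two_pow_le_two_mul_hart_add {m s : ℕ} (h₁ : 7 * 2 ^ m ≤ 16 * s)
    (h₂ : 2 * s ≤ 2 ^ m) : 3 * 2 ^ m ≤ 2 * hart m s + 4 * s := by
  rcases m with _ | m
  · omega
  · have hpow : 2 ^ (m + 1) = 2 * 2 ^ m := by ring
    rw [hart_succ_of_le (by omega), ← hart_two_pow_sub (m := m) (by omega)]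
    have := three_mul_le_hart (m := m) (s := 2 ^ m - s) (by omega)
    omega

end LowerBounds

noncomputable def takagiMinorant (x : ℝ) : ℝ :=
  if x < 1/12 then 2 * x
  else if x ≤ 1/4 then x + 1/4
  else if x ≤ 9/32 then 2 * x
  else if x ≤ 29/96 then 2 * x + 1/32
  else if x ≤ 3/8 then x + 1/4
  else if x ≤ 7/16 then 5/8
  else 3/2 - 2 * x

lemma takagiMinorant_le_hart {m s : ℕ} (h : 2 * s ≤ 2 ^ m) :
    takagiMinorant (s / 2 ^ m) ≤ hart m s / 2 ^ m := by
  have hP : (0 : ℝ) < 2 ^ m := by positivity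
  obtain ⟨x, hx⟩ : ∃ x : ℝ, (s : ℝ) = x * 2 ^ m := ⟨s / 2 ^ m, by field_simp⟩
  rw [hx, mul_div_cancel_right₀ _ hP.ne', le_div_iff₀ hP]
  have hB₁ (h₁ : x ≤ 1/3) : 2 * x * 2 ^ m ≤ hart m s := by
    have : (2 * s : ℝ) ≤ hart m s := by
      exact_mod_cast two_mul_le_hart
        (by exact_mod_cast show (3 * s : ℝ) ≤ 2 ^ m by rw [hx]; nlinarith)
    rw [hx] at this; linarith
  have hB₂ (h₁ : 1/12 ≤ x) (h₂ : x ≤ 5/12) : (x + 1/4) * 2 ^ m ≤ hart m s := by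
    have : (4 * s + 2 ^ m : ℝ) ≤ 4 * hart m s := by
      exact_mod_cast four_mul_add_two_pow_le_four_mul_hart
        (by exact_mod_cast show (2 ^ m : ℝ) ≤ 12 * s by rw [hx]; nlinarith)
        (by exact_mod_cast show (12 * s : ℝ) ≤ 5 * 2 ^ m by rw [hx]; nlinarith)
    rw [hx] at this; linarith
  have hB₃ (h₁ : 9/32 ≤ x) (h₂ : x ≤ 29/96) : (2 * x + 1/32) * 2 ^ m ≤ hart m s := by
    have : (64 * s + 2 ^ m : ℝ) ≤ 32 * hart m s := by
      exact_mod_cast sixty_four_mul_add_two_pow_le_thirty_two_mul_hart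
        (by exact_mod_cast show (9 * 2 ^ m : ℝ) ≤ 32 * s by rw [hx]; nlinarith)
        (by exact_mod_cast show (96 * s : ℝ) ≤ 29 * 2 ^ m by rw [hx]; nlinarith)
    rw [hx] at this; linarith
  have hB₄ (h₁ : 3/8 ≤ x) (h₂ : x ≤ 7/16) : 5/8 * 2 ^ m ≤ (hart m s : ℝ) := by
    have : (5 * 2 ^ m : ℝ) ≤ 8 * hart m s := by
      exact_mod_cast five_mul_two_pow_le_eight_mul_hart
        (by exact_mod_cast show (3 * 2 ^ m : ℝ) ≤ 8 * s by rw [hx]; nlinarith)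
        (by exact_mod_cast show (16 * s : ℝ) ≤ 7 * 2 ^ m by rw [hx]; nlinarith)
    linarith
  have hB₅ (h₁ : 7/16 ≤ x) : (3/2 - 2 * x) * 2 ^ m ≤ hart m s := by
    have : (3 * 2 ^ m : ℝ) ≤ 2 * hart m s + 4 * s := by
      exact_mod_cast three_mul_two_pow_le_two_mul_hart_add
        (by exact_mod_cast show (7 * 2 ^ m : ℝ) ≤ 16 * s by rw [hx]; nlinarith) h
    rw [hx] at this; linarith
  unfold takagiMinorant
  split_ifs <;> first
    | exact hB₁ (by linarith) | exact hB₂ (by linarith) (by linarith)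
    | exact hB₃ (by linarith) (by linarith) | exact hB₄ (by linarith) (by linarith)
    | exact hB₅ (by linarith)

lemma takagiMinorant_min_le_hart {m s : ℕ} (h : s ≤ 2 ^ m) :
    takagiMinorant (min (s / 2 ^ m) (1 - s / 2 ^ m)) ≤ hart m s / 2 ^ m := by
  have hP : (0 : ℝ) < 2 ^ m := by positivity
  rcases le_total (2 * s) (2 ^ m) with hs | hs
  · have : (s : ℝ) / 2 ^ m ≤ 1 - s / 2 ^ m := by
      rw [le_sub_iff_add_le, ← add_div, div_le_one hP]
      exact_mod_cast (by omega : s + s ≤ 2 ^ m)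
    rw [min_eq_left this]
    exact takagiMinorant_le_hart hs
  · have hsub : 1 - (s : ℝ) / 2 ^ m = ((2 ^ m - s : ℕ) : ℝ) / 2 ^ m := by
      push_cast [h]; field_simp
    have : 1 - (s : ℝ) / 2 ^ m ≤ s / 2 ^ m := by
      rw [sub_le_iff_le_add, ← add_div, one_le_div hP]
      exact_mod_cast (by omega : 2 ^ m ≤ s + s)
    rw [min_eq_right this, hsub, ← hart_two_pow_sub h]
    exact takagiMinorant_le_hart (by omega)

set_option maxHeartbeats 400000 in
/-- Each cell of `takagiMinorant` leaves a linear inequality once `(u + v - 1)²` is replaced by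
its tangent line at `u + v = 25/32` or at `u + v = 1`. -/
lemma two_mul_fGuu_le_of_takagiMinorant_le {u v b₁ b₂ : ℝ} (hu : 1/12 ≤ u)
    (hu' : u ≤ 29/96) (huv : u ≤ v) (hvu : u + v ≤ 1)
    (hb₁ : takagiMinorant (min u (1 - u)) ≤ b₁)
    (hb₂ : takagiMinorant (min v (1 - v)) ≤ b₂) :
    2 * fGuu ((u + v) / 2) ≤ v - u + b₁ + b₂ := by
  rw [min_eq_left (by linarith)] at hb₁
  unfold fGuu
  rcases min_cases v (1 - v) with ⟨hv, hv'⟩ | ⟨hv, hv'⟩ <;> rw [hv] at hb₂ <;>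
  unfold takagiMinorant at hb₁ hb₂ <;> split_ifs at hb₁ hb₂ <;>
  linarith [sq_nonneg (u + v - 25/32), sq_nonneg (u + v - 1)]

lemma exists_card_inter_halfPlane_eq_typeOf {n : ℕ} (S : Finset (Fin (n + 1) → Bool)) :
    ∃ i a, #(S ∩ halfPlane (n + 1) i a) = typeOf (n + 1) S :=
  Nat.sInf_mem (s := {c | ∃ i a, #(S ∩ halfPlane (n + 1) i a) = c}) ⟨_, 0, false, rfl⟩

lemma add_hart_le_edgeBoundary {m k t : ℕ} {S : Finset (Fin (m + 1) → Bool)} (hk : #S = k)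
    (ht : typeOf (m + 1) S = t) (h : 2 * t ≤ k) :
    k - 2 * t + hart m t + hart m (k - t) ≤ edgeBoundary (m + 1) S := by
  obtain ⟨i, a, hia⟩ := exists_card_inter_halfPlane_eq_typeOf S
  rw [← card_gPre, ht] at hia
  obtain ⟨hsplit, hsum⟩ : edgeBoundary m (gPre m i a S) + edgeBoundary m (gPre m i (!a) S)
      + Nat.dist #(gPre m i a S) #(gPre m i (!a) S) ≤ edgeBoundary (m + 1) S ∧
      #(gPre m i a S) + #(gPre m i (!a) S) = #S := by
    have := edgeBoundary_gPre_add_le i S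
    have := card_gPre_false_add_true i S
    cases a
    · exact ⟨by assumption, by assumption⟩
    · rw [Bool.not_true, Nat.dist_comm]; constructor <;> omega
  have h₁ := hart_card_le_edgeBoundary m (gPre m i a S)
  have h₂ := hart_card_le_edgeBoundary m (gPre m i (!a) S)
  rw [hia] at h₁ hsplit hsum
  rw [show #(gPre m i (!a) S) = k - t by omega] at h₂ hsplit
  simp only [Nat.dist] at hsplit
  omega

lemma two_pow_mul_fGuu_le_add_hart {m k t : ℕ} (h2t : 2 * t ≤ k) (hk : k ≤ 2 ^ m)
    (hlow : (1 : ℝ) / 24 ≤ t / 2 ^ (m + 1)) (hhigh : (t : ℝ) / 2 ^ (m + 1) ≤ 1/24 + 7/64) :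
    2 ^ (m + 1) * fGuu (k / 2 ^ (m + 1))
      ≤ ((k - 2 * t + hart m t + hart m (k - t) : ℕ) : ℝ) := by
  have hP : (0 : ℝ) < 2 ^ m := by positivity
  have hkR : (k : ℝ) ≤ 2 ^ m := by exact_mod_cast hk
  have h2tR : (2 * t : ℝ) ≤ k := by exact_mod_cast h2t
  rw [pow_succ] at hlow hhigh
  have key := two_mul_fGuu_le_of_takagiMinorant_le (u := t / 2 ^ m) (v := (k - t : ℕ) / 2 ^ m)
    (by rw [le_div_iff₀ hP]; rw [le_div_iff₀ (by positivity)] at hlow; linarith)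
    (by rw [div_le_iff₀ hP]; rw [div_le_iff₀ (by positivity)] at hhigh; linarith)
    (by push_cast [show t ≤ k by omega]; gcongr; linarith)
    (by push_cast [show t ≤ k by omega]; rw [← add_div, div_le_one hP]; linarith)
    (takagiMinorant_min_le_hart (by omega)) (takagiMinorant_min_le_hart (by omega))
  push_cast [show t ≤ k by omega, h2t] at key ⊢
  calc (2 : ℝ) ^ (m + 1) * fGuu (k / 2 ^ (m + 1))
      = 2 ^ m * (2 * fGuu ((t / 2 ^ m + (k - t) / 2 ^ m) / 2)) := by
        rw [show ((t : ℝ) / 2 ^ m + (k - t) / 2 ^ m) / 2 = k / 2 ^ (m + 1) by field_simp; ring]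
        ring
    _ ≤ 2 ^ m * ((k - t) / 2 ^ m - t / 2 ^ m + hart m t / 2 ^ m + hart m (k - t) / 2 ^ m) := by
        gcongr
    _ = k - 2 * t + hart m t + hart m (k - t) := by field_simp; ring

theorem theta_lower_bound_middle_type_general (n k t : ℕ) (hn : 3 ≤ n)
    (S : Finset (Fin n → Bool)) (hcard : S.card = k) (htype : typeOf n S = t)
    (h2t : 2*t ≤ k) (hk : k ≤ 2^(n-1))
    (hlow : (1:ℝ)/24 ≤ (t:ℝ)/2^n) (hhigh : (t:ℝ)/2^n ≤ 1/24 + 7/64) :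
    (edgeBoundary n S : ℝ) ≥ 2^n * fGuu ((k:ℝ)/2^n) := by
  obtain ⟨m, rfl⟩ : ∃ m, n = m + 1 := ⟨n - 1, by omega⟩
  calc (2 : ℝ) ^ (m + 1) * fGuu (k / 2 ^ (m + 1))
      ≤ ((k - 2 * t + hart m t + hart m (k - t) : ℕ) : ℝ) :=
        two_pow_mul_fGuu_le_add_hart h2t hk hlow hhigh
    _ ≤ edgeBoundary (m + 1) S := by exact_mod_cast add_hart_le_edgeBoundary hcard htype h2t

/-- Guu, Claim 15. -/
theorem theta_lower_bound_middle_type (n k t : ℕ) (hn : 3 ≤ n)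
    (S : Finset (Fin n → Bool)) (hcard : S.card = k) (htype : typeOf n S = t)
    (ht0 : 0 < 2*t) (h2t : 2*t ≤ k) (hk : k ≤ 2^(n-1))
    (hlow : (1:ℝ)/24 ≤ (t:ℝ)/2^n) (hhigh : (t:ℝ)/2^n ≤ 1/24 + 7/64) :
    (edgeBoundary n S : ℝ) ≥ 2^n * fGuu ((k:ℝ)/2^n) :=
  theta_lower_bound_middle_type_general n k t hn S hcard htype h2t hk hlow hhigh
end

section
/- For every integer n ≥ 1, Σ_{i=0}^{2^{n−1}} θ(n,i) = 2^{2n−2}. -/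
open Finset

/-!
Let `F k` be the number of ones in the binary expansions of `0, …, k - 1`. Harper's
edge-isoperimetric theorem in exact form says `θ(n,k) = n k - 2 F k` for `k ≤ 2^n`.
Splitting `S ⊆ Q_{n+1}` along the first coordinate into `A, B ⊆ Q_n` gives
`θ(S) = θ(A) + θ(B) + |A \ B| + |B \ A| ≥ θ(A) + θ(B) + |A| + |B| - 2 min(|A|, |B|)`,
so the lower bound follows by induction from `F x + F y + min x y ≤ F (x + y)`;
initial segments of the binary order attain it. Pairing `2j` with `2j + 1` gives
`∑_{k < 2^m} (m k - 2 F k) = ∑_{k < 2^m} k`, and the theorem is a rearrangement of this.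
-/

lemma sum_range_two_mul {M : Type*} [AddCommMonoid M] (f : ℕ → M) (N : ℕ) :
    ∑ k ∈ range (2 * N), f k = ∑ j ∈ range N, (f (2 * j) + f (2 * j + 1)) := by
  induction N with
  | zero => rfl
  | succ N ih => rw [mul_add_one, sum_range_succ, sum_range_succ, ih, sum_range_succ, add_assoc]

lemma card_add_card_le_card_sdiff_add_card_sdiff {α : Type*} [DecidableEq α] (A B : Finset α) :
    #A + #B ≤ #(A \ B) + #(B \ A) + 2 * min #A #B := by
  have hA := card_sdiff_add_card_inter A B
  have hB := card_sdiff_add_card_inter B A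
  have hAB : #(A ∩ B) ≤ min #A #B :=
    le_min (card_le_card inter_subset_left) (card_le_card inter_subset_right)
  rw [inter_comm] at hB
  omega

lemma digits_sum_two_mul (t : ℕ) : (Nat.digits 2 (2 * t)).sum = (Nat.digits 2 t).sum := by
  rcases t.eq_zero_or_pos with rfl | ht
  · simp
  · simp [Nat.digits_def' one_lt_two (by omega : 0 < 2 * t)]

lemma digits_sum_two_mul_add_one (t : ℕ) :
    (Nat.digits 2 (2 * t + 1)).sum = (Nat.digits 2 t).sum + 1 := by
  rw [Nat.digits_def' one_lt_two (by omega), List.sum_cons, add_comm, Nat.mul_add_div two_pos]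
  simp

lemma digits_sum_add_two_pow {j m : ℕ} (hj : j < 2 ^ m) :
    (Nat.digits 2 (j + 2 ^ m)).sum = (Nat.digits 2 j).sum + 1 := by
  -- the binary digits of `j + 2 ^ m` are those of `j`, then zeros, then a single one
  obtain ⟨k, hk⟩ := Nat.exists_eq_add_of_le ((Nat.digits_length_le_iff one_lt_two j).2 hj)
  have := Nat.digits_append_zeroes_append_digits (b := 2) (k := k) (m := 1) (n := j)
    one_lt_two one_pos
  rw [← hk, mul_one] at this
  rw [← this]
  simp

def binaryOnesBelow (k : ℕ) : ℕ := ∑ m ∈ range k, (Nat.digits 2 m).sum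

lemma binaryOnesBelow_succ (k : ℕ) :
    binaryOnesBelow (k + 1) = binaryOnesBelow k + (Nat.digits 2 k).sum :=
  sum_range_succ _ _

lemma binaryOnesBelow_two_mul (t : ℕ) : binaryOnesBelow (2 * t) = 2 * binaryOnesBelow t + t := by
  induction t with
  | zero => rfl
  | succ t ih =>
    rw [mul_add_one, binaryOnesBelow_succ, ← add_assoc, binaryOnesBelow_succ, ih,
      binaryOnesBelow_succ, digits_sum_two_mul, digits_sum_two_mul_add_one]
    ring

lemma binaryOnesBelow_two_mul_add_one (t : ℕ) :
    binaryOnesBelow (2 * t + 1) = 2 * binaryOnesBelow t + t + (Nat.digits 2 t).sum := by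
  rw [binaryOnesBelow_succ, binaryOnesBelow_two_mul, digits_sum_two_mul]

theorem binaryOnesBelow_add_add_min_le (x y : ℕ) :
    binaryOnesBelow x + binaryOnesBelow y + min x y ≤ binaryOnesBelow (x + y) := by
  induction hN : x + y using Nat.strong_induction_on generalizing x y with
  | _ N ih =>
  subst hN
  rcases Nat.eq_zero_or_pos x with rfl | hx
  · simp [binaryOnesBelow]
  rcases Nat.eq_zero_or_pos y with rfl | hy
  · simp [binaryOnesBelow]
  obtain ⟨a, r, hr, rfl⟩ : ∃ a r, r < 2 ∧ x = 2 * a + r :=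
    ⟨x / 2, x % 2, x.mod_lt two_pos, by omega⟩
  obtain ⟨b, q, hq, rfl⟩ : ∃ b q, q < 2 ∧ y = 2 * b + q :=
    ⟨y / 2, y % 2, y.mod_lt two_pos, by omega⟩
  -- each of the four parity cases follows from the bound at `(a, b)`, `(a + 1, b)`, `(a, b + 1)`
  have h₀ := ih (a + b) (by omega) a b rfl
  have h₁ := ih (a + b + 1) (by omega) (a + 1) b (by ring)
  have h₂ := ih (a + b + 1) (by omega) a (b + 1) (by ring)
  have h₃ := binaryOnesBelow_succ (a + b)
  rw [binaryOnesBelow_succ] at h₁ h₂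
  interval_cases r <;> interval_cases q <;>
    simp only [add_zero, binaryOnesBelow_two_mul, binaryOnesBelow_two_mul_add_one,
      show 2 * a + (2 * b + 1) = 2 * (a + b) + 1 by ring,
      show 2 * a + 1 + 2 * b = 2 * (a + b) + 1 by ring,
      show 2 * a + 1 + (2 * b + 1) = 2 * (a + b + 1) by ring, ← mul_add] <;> omega

lemma two_mul_binaryOnesBelow_two_pow (m : ℕ) : 2 * binaryOnesBelow (2 ^ m) = m * 2 ^ m := by
  induction m with
  | zero => rfl
  | succ m ih => rw [pow_succ', binaryOnesBelow_two_mul]; linarith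

lemma binaryOnesBelow_add_two_pow {j m : ℕ} (hj : j ≤ 2 ^ m) :
    binaryOnesBelow (j + 2 ^ m) = binaryOnesBelow j + binaryOnesBelow (2 ^ m) + j := by
  induction j with
  | zero => simp [binaryOnesBelow]
  | succ j ih =>
    rw [add_right_comm, binaryOnesBelow_succ, ih (by omega), digits_sum_add_two_pow (by omega),
      binaryOnesBelow_succ]
    ring

theorem sum_range_two_pow_binaryOnesBelow (m : ℕ) :
    2 * ∑ k ∈ range (2 ^ m), binaryOnesBelow k + ∑ k ∈ range (2 ^ m), k
      = m * ∑ k ∈ range (2 ^ m), k := by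
  induction m with
  | zero => rfl
  | succ m ih =>
    have hF : ∑ k ∈ range (2 ^ (m + 1)), binaryOnesBelow k
        = 4 * ∑ k ∈ range (2 ^ m), binaryOnesBelow k + 2 * ∑ k ∈ range (2 ^ m), k
          + binaryOnesBelow (2 ^ m) := by
      rw [pow_succ', sum_range_two_mul, binaryOnesBelow, mul_sum, mul_sum, ← sum_add_distrib,
        ← sum_add_distrib]
      refine sum_congr rfl fun j _ => ?_
      rw [binaryOnesBelow_two_mul, binaryOnesBelow_two_mul_add_one, binaryOnesBelow]
      ring
    have hS : ∑ k ∈ range (2 ^ (m + 1)), k = 4 * ∑ k ∈ range (2 ^ m), k + 2 ^ m := by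
      rw [pow_succ', sum_range_two_mul]
      rw [sum_add_distrib, sum_add_distrib, ← mul_sum, sum_const, card_range, smul_eq_mul]
      ring
    have := two_mul_binaryOnesBelow_two_pow m
    rw [hF, hS]
    linarith

section Hypercube

variable {n : ℕ}

def cubeFlip (i : Fin n) (u : Fin n → Bool) : Fin n → Bool := Function.update u i (!u i)

lemma cubeEdge_iff_exists_cubeFlip {u v : Fin n → Bool} :
    cubeEdge u v ↔ ∃ i, v = cubeFlip i u := by
  simp only [cubeEdge, card_eq_one, Finset.ext_iff, mem_filter, mem_univ, true_and, mem_singleton,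
    cubeFlip, funext_iff, Function.update_apply]
  refine exists_congr fun i => forall_congr' fun j => ?_
  rcases eq_or_ne j i with rfl | hji
  · cases u j <;> cases v j <;> simp
  · simp [hji, eq_comm]

lemma cubeFlip_injective (u : Fin n → Bool) : Function.Injective fun i => cubeFlip i u := by
  intro i j h
  by_contra hij
  have := congrFun h i
  simp [cubeFlip, hij] at this

lemma cubeFlip_zero_cons (a : Bool) (x : Fin n → Bool) :
    cubeFlip 0 (Fin.cons a x : Fin (n + 1) → Bool) = Fin.cons (!a) x := by
  simp [cubeFlip, Fin.update_cons_zero]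

lemma cubeFlip_succ_cons (j : Fin n) (a : Bool) (x : Fin n → Bool) :
    cubeFlip j.succ (Fin.cons a x : Fin (n + 1) → Bool) = Fin.cons a (cubeFlip j x) := by
  simp [cubeFlip, Fin.cons_update]

theorem edgeBoundary_eq_sum_card_cubeFlip (S : Finset (Fin n → Bool)) :
    edgeBoundary n S = ∑ i, #{u | u ∈ S ∧ cubeFlip i u ∉ S} := by
  have hpairs : ∑ i, #{u | u ∈ S ∧ cubeFlip i u ∉ S}
      = #{p : Fin n × (Fin n → Bool) | p.2 ∈ S ∧ cubeFlip p.1 p.2 ∉ S} := by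
    simp only [card_filter, Fintype.sum_prod_type]
  rw [hpairs, edgeBoundary]
  symm
  refine card_bij (fun p _ => (p.2, cubeFlip p.1 p.2)) ?_ ?_ ?_
  · rintro ⟨i, u⟩ hp
    simp only [mem_filter, mem_univ, true_and] at hp ⊢
    exact ⟨hp.1, hp.2, cubeEdge_iff_exists_cubeFlip.2 ⟨i, rfl⟩⟩
  · rintro ⟨i, u⟩ - ⟨j, v⟩ - h
    simp only [Prod.mk.injEq] at h
    obtain ⟨rfl, h⟩ := h
    rw [cubeFlip_injective u h]
  · rintro ⟨u, v⟩ hp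
    simp only [mem_filter, mem_univ, true_and] at hp
    obtain ⟨i, rfl⟩ := cubeEdge_iff_exists_cubeFlip.1 hp.2.2
    exact ⟨(i, u), by simp [hp.1, hp.2.1], rfl⟩

lemma card_filter_eq_sum_card_filter_cons (P : (Fin (n + 1) → Bool) → Prop) [DecidablePred P] :
    #{u | P u} = ∑ a, #{x : Fin n → Bool | P (Fin.cons a x)} := by
  simp only [card_filter]
  rw [← (Fin.consEquiv fun _ => Bool).sum_comp, Fintype.sum_prod_type]
  rfl

lemma mem_gPre_zero {a : Bool} {S : Finset (Fin (n + 1) → Bool)} {x : Fin n → Bool} :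
    x ∈ gPre n 0 a S ↔ Fin.cons a x ∈ S := by
  simp [gPre, Fin.insertNth_zero']

lemma card_eq_sum_card_gPre_zero (S : Finset (Fin (n + 1) → Bool)) :
    #S = ∑ a, #(gPre n 0 a S) := by
  calc #S = #{u | u ∈ S} := by rw [filter_univ_mem]
    _ = ∑ a, #(gPre n 0 a S) := by
      simp only [card_filter_eq_sum_card_filter_cons, gPre, Fin.insertNth_zero']

theorem edgeBoundary_succ (S : Finset (Fin (n + 1) → Bool)) :
    edgeBoundary (n + 1) S
      = ∑ a, edgeBoundary n (gPre n 0 a S) + ∑ a, #(gPre n 0 a S \ gPre n 0 (!a) S) := by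
  rw [edgeBoundary_eq_sum_card_cubeFlip, Fin.sum_univ_succ, add_comm]
  congr 1
  · simp only [card_filter_eq_sum_card_filter_cons, cubeFlip_succ_cons,
      edgeBoundary_eq_sum_card_cubeFlip]
    rw [sum_comm]
    simp only [mem_gPre_zero]
  · simp only [card_filter_eq_sum_card_filter_cons, cubeFlip_zero_cons]
    refine sum_congr rfl fun a _ => congrArg card ?_
    ext x
    simp [mem_gPre_zero]

lemma edgeBoundary_empty : edgeBoundary n ∅ = 0 := by
  simp [edgeBoundary]

lemma edgeBoundary_univ : edgeBoundary n univ = 0 := by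
  simp [edgeBoundary]

theorem mul_card_le_edgeBoundary_add (S : Finset (Fin n → Bool)) :
    n * #S ≤ edgeBoundary n S + 2 * binaryOnesBelow #S := by
  induction n with
  | zero => simp
  | succ n ih =>
    have hcard := card_eq_sum_card_gPre_zero S
    have hbdry := edgeBoundary_succ S
    simp only [Fintype.sum_bool, Bool.not_true, Bool.not_false] at hcard hbdry
    set A := gPre n 0 false S
    set B := gPre n 0 true S
    have hA := ih A
    have hB := ih B
    have hsuper := binaryOnesBelow_add_add_min_le #B #A
    have hsdiff := card_add_card_le_card_sdiff_add_card_sdiff B A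
    rw [hcard, hbdry]
    linarith

def cubeJoin (A B : Finset (Fin n → Bool)) : Finset (Fin (n + 1) → Bool) :=
  {u | Fin.tail u ∈ bif u 0 then B else A}

lemma gPre_zero_cubeJoin (a : Bool) (A B : Finset (Fin n → Bool)) :
    gPre n 0 a (cubeJoin A B) = bif a then B else A := by
  ext x
  simp [mem_gPre_zero, cubeJoin]

lemma card_cubeJoin (A B : Finset (Fin n → Bool)) : #(cubeJoin A B) = #A + #B := by
  simp [card_eq_sum_card_gPre_zero (cubeJoin A B), gPre_zero_cubeJoin, add_comm]

lemma edgeBoundary_cubeJoin (A B : Finset (Fin n → Bool)) :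
    edgeBoundary (n + 1) (cubeJoin A B)
      = edgeBoundary n A + edgeBoundary n B + (#(A \ B) + #(B \ A)) := by
  simp only [edgeBoundary_succ, Fintype.sum_bool, gPre_zero_cubeJoin, Bool.not_true,
    Bool.not_false, cond_true, cond_false]
  ring

theorem exists_card_eq_edgeBoundary_add_eq {k : ℕ} (hk : k ≤ 2 ^ n) :
    ∃ S : Finset (Fin n → Bool),
      #S = k ∧ edgeBoundary n S + 2 * binaryOnesBelow k = n * k := by
  induction n generalizing k with
  | zero =>
    interval_cases k
    · exact ⟨∅, by simp [edgeBoundary, binaryOnesBelow]⟩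
    · exact ⟨univ, by simp, by rw [edgeBoundary_univ]; simp [binaryOnesBelow]⟩
  | succ n ih =>
    by_cases hkn : k ≤ 2 ^ n
    · obtain ⟨S, hS, hθ⟩ := ih hkn
      refine ⟨cubeJoin S ∅, by simp [card_cubeJoin, hS], ?_⟩
      rw [edgeBoundary_cubeJoin, edgeBoundary_empty, sdiff_empty, empty_sdiff, card_empty, hS]
      linarith
    · obtain ⟨j, rfl⟩ : ∃ j, k = j + 2 ^ n := ⟨k - 2 ^ n, by omega⟩
      obtain ⟨S, hS, hθ⟩ := ih (k := j) (by rw [pow_succ] at hk; omega)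
      refine ⟨cubeJoin univ S, by simp [card_cubeJoin, hS, add_comm], ?_⟩
      have hj : j ≤ 2 ^ n := by rw [pow_succ] at hk; omega
      have hcompl : #(univ \ S) + j = 2 ^ n := by
        rw [← hS, card_sdiff_add_card_eq_card (subset_univ S)]
        simp
      have hpow := two_mul_binaryOnesBelow_two_pow n
      rw [edgeBoundary_cubeJoin, edgeBoundary_univ, sdiff_eq_empty_iff_subset.2 (subset_univ S),
        card_empty, binaryOnesBelow_add_two_pow hj]
      linarith

theorem thetaMin_add_two_mul_binaryOnesBelow {k : ℕ} (hk : k ≤ 2 ^ n) :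
    thetaMin n k + 2 * binaryOnesBelow k = n * k := by
  obtain ⟨S, hS, hθ⟩ := exists_card_eq_edgeBoundary_add_eq hk
  have hmin : thetaMin n k = edgeBoundary n S := by
    refine IsLeast.csInf_eq ⟨⟨S, hS, rfl⟩, ?_⟩
    rintro _ ⟨T, rfl, rfl⟩
    have := mul_card_le_edgeBoundary_add T
    omega
  omega

end Hypercube

/-- Guu, Claim 12. `Σ_{i=0}^{2^{n−1}} θ(n,i) = 2^{2n−2}`. -/
theorem sum_theta_eq (n : ℕ) (hn : 1 ≤ n) :
    ∑ i ∈ Finset.range (2^(n-1) + 1), thetaMin n i = 2^(2*n - 2) := by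
  obtain ⟨m, rfl⟩ : ∃ m, n = m + 1 := ⟨n - 1, by omega⟩
  rw [Nat.add_sub_cancel, show 2 * (m + 1) - 2 = m * 2 by omega, pow_mul]
  have hθ : ∑ k ∈ range (2 ^ m + 1), (thetaMin (m + 1) k + 2 * binaryOnesBelow k)
      = (m + 1) * ∑ k ∈ range (2 ^ m + 1), k := by
    rw [mul_sum]
    refine sum_congr rfl fun k hk => thetaMin_add_two_mul_binaryOnesBelow ?_
    rw [mem_range] at hk
    rw [pow_succ]
    omega
  have hGauss := sum_range_id_mul_two (2 ^ m + 1)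
  have hF := sum_range_two_pow_binaryOnesBelow m
  have hFpow := two_mul_binaryOnesBelow_two_pow m
  rw [sum_add_distrib, ← mul_sum, sum_range_succ binaryOnesBelow,
    sum_range_succ (fun k => k)] at hθ
  rw [sum_range_succ (fun k => k), Nat.add_sub_cancel] at hGauss
  linarith
end

section
/- Let n ≥ 2 be an integer and let S ⊆ V(Q_n) with |S| = k and Type(S) = t. Then θ(n,S) ≥ θ(n−1,t) + θ(n−1,k−t) + k − 2t. -/
open Finset

-- auxiliary lemmas

lemma diff_card {m : ℕ} (i : Fin (m+1)) (a b : Bool) (x y : Fin m → Bool) :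
    (univ.filter (fun j => (i.insertNth a x : Fin (m+1) → Bool) j ≠ (i.insertNth b y : Fin (m+1) → Bool) j)).card
      = (if a = b then 0 else 1) + (univ.filter (fun k => x k ≠ y k)).card := by
  rw [Finset.card_filter, Finset.card_filter, Fin.sum_univ_succAbove _ i]
  simp only [Fin.insertNth_apply_same, Fin.insertNth_apply_succAbove]
  congr 1
  cases a <;> cases b <;> simp

lemma edge_insert_same {m : ℕ} (i : Fin (m+1)) (a : Bool) (x y : Fin m → Bool) :
    cubeEdge (i.insertNth a x : Fin (m+1) → Bool) (i.insertNth a y) ↔ cubeEdge x y := by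
  unfold cubeEdge
  rw [diff_card]
  simp

lemma edge_insert_cross {m : ℕ} (i : Fin (m+1)) {a b : Bool} (hab : a ≠ b)
    (x : Fin m → Bool) : cubeEdge (i.insertNth a x : Fin (m+1) → Bool) (i.insertNth b x) := by
  unfold cubeEdge
  rw [diff_card]
  simp [hab]

lemma insertNth_inj {m : ℕ} (i : Fin (m+1)) (a : Bool) :
    Function.Injective (fun x : Fin m → Bool => (i.insertNth a x : Fin (m+1) → Bool)) := by
  intro x y h
  have := congrArg i.removeNth h
  simpa [Fin.removeNth_insertNth] using this

lemma gPre_card {m : ℕ} (i : Fin (m+1)) (b : Bool) (S : Finset (Fin (m+1) → Bool)) :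
    (gPre m i b S).card = (S ∩ halfPlane (m+1) i b).card := by
  apply Finset.card_bij (fun (x : Fin m → Bool) _ => (i.insertNth b x : Fin (m+1) → Bool))
  · intro x hx
    simp only [gPre, mem_filter, mem_univ, true_and] at hx
    simp [mem_inter, halfPlane, hx, Fin.insertNth_apply_same]
  · intro x _ y _ h
    exact insertNth_inj i b h
  · intro y hy
    simp only [mem_inter, halfPlane, mem_filter, mem_univ, true_and] at hy
    refine ⟨i.removeNth y, ?_, ?_⟩
    · simp only [gPre, mem_filter, mem_univ, true_and]
      rw [← hy.2, Fin.insertNth_self_removeNth]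
      exact hy.1
    · rw [← hy.2, Fin.insertNth_self_removeNth]


/-- `θ(n,S) ≥ θ(n−1,t) + θ(n−1,k−t) + k − 2t` when `|S| = k` and
`Type(S) = t`. -/
theorem theta_type_recursive_bound (n k t : ℕ) (hn : 2 ≤ n)
    (S : Finset (Fin n → Bool)) (hcard : S.card = k) (htype : typeOf n S = t) :
    edgeBoundary n S ≥ thetaMin (n-1) t + thetaMin (n-1) (k - t) + (k - 2*t) := by
  obtain ⟨m, rfl⟩ : ∃ m, n = m + 1 := ⟨n - 1, by omega⟩
  simp only [Nat.add_sub_cancel]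
  -- obtain minimizing half plane
  have hne : {m' | ∃ (i : Fin (m+1)) (a : Bool),
      (S ∩ halfPlane (m+1) i a).card = m'}.Nonempty := ⟨_, ⟨0, true, rfl⟩⟩
  obtain ⟨i, a, ha⟩ : ∃ (i : Fin (m+1)) (a : Bool),
      (S ∩ halfPlane (m+1) i a).card = t := by
    rw [← htype]; exact Nat.sInf_mem hne
  have hle : t ≤ (S ∩ halfPlane (m+1) i (!a)).card := by
    rw [← htype]; exact Nat.sInf_le ⟨i, !a, rfl⟩
  -- the two half-plane pieces
  set S₀ := gPre m i a S with hS₀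
  set S₁ := gPre m i (!a) S with hS₁
  have hmem₀ : ∀ x : Fin m → Bool, x ∈ S₀ ↔ i.insertNth a x ∈ S := by
    intro x; simp [hS₀, gPre]
  have hmem₁ : ∀ x : Fin m → Bool, x ∈ S₁ ↔ i.insertNth (!a) x ∈ S := by
    intro x; simp [hS₁, gPre]
  have hc₀ : S₀.card = t := by rw [hS₀, gPre_card, ha]
  -- partition of S into the two half planes
  have hsplit : (S ∩ halfPlane (m+1) i a).card + (S ∩ halfPlane (m+1) i (!a)).card
      = S.card := by
    have h1 : S ∩ halfPlane (m+1) i a = S.filter (fun x => x i = a) := by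
      ext x; simp [halfPlane, mem_inter, mem_filter]
    have h2 : S ∩ halfPlane (m+1) i (!a) = S.filter (fun x => ¬ (x i = a)) := by
      ext x; simp only [halfPlane, mem_inter, mem_filter, mem_univ, true_and]
      constructor
      · rintro ⟨hx, h⟩; exact ⟨hx, by rw [h]; cases a <;> simp⟩
      · rintro ⟨hx, h⟩; refine ⟨hx, ?_⟩; cases a <;> revert h <;> cases x i <;> simp
    rw [h1, h2, Finset.card_filter_add_card_filter_not]
  have hc₁ : S₁.card = k - t := by
    rw [hS₁, gPre_card]
    omega
  have htk : t ≤ k := by omega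
  -- three disjoint families of boundary edges of S
  classical
  set B := (univ.filter (fun p : (Fin (m+1) → Bool) × (Fin (m+1) → Bool) =>
    p.1 ∈ S ∧ p.2 ∉ S ∧ cubeEdge p.1 p.2)) with hB
  set T₀ := ((univ.filter (fun p : (Fin m → Bool) × (Fin m → Bool) =>
    p.1 ∈ S₀ ∧ p.2 ∉ S₀ ∧ cubeEdge p.1 p.2)).image
      (fun p => ((i.insertNth a p.1 : Fin (m+1) → Bool), (i.insertNth a p.2 : Fin (m+1) → Bool)))) with hT₀
  set T₁ := ((univ.filter (fun p : (Fin m → Bool) × (Fin m → Bool) =>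
    p.1 ∈ S₁ ∧ p.2 ∉ S₁ ∧ cubeEdge p.1 p.2)).image
      (fun p => ((i.insertNth (!a) p.1 : Fin (m+1) → Bool), (i.insertNth (!a) p.2 : Fin (m+1) → Bool)))) with hT₁
  set Tc := ((S₁ \ S₀).image (fun x => ((i.insertNth (!a) x : Fin (m+1) → Bool), (i.insertNth a x : Fin (m+1) → Bool)))) with hTc
  have haa : (a : Bool) ≠ !a := by cases a <;> simp
  have hsub : T₀ ∪ T₁ ∪ Tc ⊆ B := by
    intro p hp
    simp only [mem_union] at hp
    rcases hp with (hp | hp) | hp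
    · simp only [hT₀, mem_image, mem_filter, mem_univ, true_and] at hp
      obtain ⟨q, ⟨h1, h2, h3⟩, rfl⟩ := hp
      simp only [hB, mem_filter, mem_univ, true_and]
      exact ⟨(hmem₀ q.1).1 h1, fun h => h2 ((hmem₀ q.2).2 h),
        (edge_insert_same i a q.1 q.2).2 h3⟩
    · simp only [hT₁, mem_image, mem_filter, mem_univ, true_and] at hp
      obtain ⟨q, ⟨h1, h2, h3⟩, rfl⟩ := hp
      simp only [hB, mem_filter, mem_univ, true_and]
      exact ⟨(hmem₁ q.1).1 h1, fun h => h2 ((hmem₁ q.2).2 h),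
        (edge_insert_same i (!a) q.1 q.2).2 h3⟩
    · simp only [hTc, mem_image, mem_sdiff] at hp
      obtain ⟨x, ⟨h1, h2⟩, rfl⟩ := hp
      simp only [hB, mem_filter, mem_univ, true_and]
      exact ⟨(hmem₁ x).1 h1, fun h => h2 ((hmem₀ x).2 h),
        edge_insert_cross i haa.symm x⟩
  -- disjointness via values at coordinate i
  have hv₀ : ∀ p ∈ T₀, p.1 i = a ∧ p.2 i = a := by
    intro p hp
    simp only [hT₀, mem_image] at hp
    obtain ⟨q, _, rfl⟩ := hp
    simp [Fin.insertNth_apply_same]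
  have hv₁ : ∀ p ∈ T₁, p.1 i = !a ∧ p.2 i = !a := by
    intro p hp
    simp only [hT₁, mem_image] at hp
    obtain ⟨q, _, rfl⟩ := hp
    simp [Fin.insertNth_apply_same]
  have hvc : ∀ p ∈ Tc, p.1 i = !a ∧ p.2 i = a := by
    intro p hp
    simp only [hTc, mem_image] at hp
    obtain ⟨q, _, rfl⟩ := hp
    simp [Fin.insertNth_apply_same]
  have hd01 : Disjoint T₀ T₁ := by
    rw [Finset.disjoint_left]
    intro p h0 h1
    exact haa ((hv₀ p h0).1.symm.trans (hv₁ p h1).1)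
  have hd0c : Disjoint T₀ Tc := by
    rw [Finset.disjoint_left]
    intro p h0 h1
    exact haa ((hv₀ p h0).1.symm.trans (hvc p h1).1)
  have hd1c : Disjoint T₁ Tc := by
    rw [Finset.disjoint_left]
    intro p h0 h1
    exact haa ((hvc p h1).2.symm.trans (hv₁ p h0).2)
  have hcardsum : B.card ≥ T₀.card + T₁.card + Tc.card := by
    calc T₀.card + T₁.card + Tc.card
        = (T₀ ∪ T₁ ∪ Tc).card := by
          rw [Finset.card_union_of_disjoint, Finset.card_union_of_disjoint hd01]
          rw [Finset.disjoint_union_left]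
          exact ⟨hd0c, hd1c⟩
      _ ≤ B.card := Finset.card_le_card hsub
  -- compute cards of the images
  have hinj2 : ∀ b : Bool, Function.Injective
      (fun p : (Fin m → Bool) × (Fin m → Bool) =>
        ((i.insertNth b p.1 : Fin (m+1) → Bool), (i.insertNth b p.2 : Fin (m+1) → Bool))) := by
    intro b p q h
    have h1 := congrArg Prod.fst h
    have h2 := congrArg Prod.snd h
    exact Prod.ext (insertNth_inj i b h1) (insertNth_inj i b h2)
  have hcT₀ : T₀.card = edgeBoundary m S₀ := by
    rw [hT₀, Finset.card_image_of_injective _ (hinj2 a)]; rfl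
  have hcT₁ : T₁.card = edgeBoundary m S₁ := by
    rw [hT₁, Finset.card_image_of_injective _ (hinj2 (!a))]; rfl
  have hcTc : Tc.card = (S₁ \ S₀).card := by
    rw [hTc, Finset.card_image_of_injective]
    intro x y h
    exact insertNth_inj i (!a) (congrArg Prod.fst h)
  have hcross : Tc.card ≥ k - 2 * t := by
    rw [hcTc]
    have := Finset.card_le_card_sdiff_add_card (s := S₁) (t := S₀)
    omega
  -- thetaMin bounds
  have hθ₀ : thetaMin m t ≤ edgeBoundary m S₀ := Nat.sInf_le ⟨S₀, hc₀, rfl⟩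
  have hθ₁ : thetaMin m (k - t) ≤ edgeBoundary m S₁ := Nat.sInf_le ⟨S₁, hc₁, rfl⟩
  have hEB : edgeBoundary (m+1) S = B.card := rfl
  omega
end

section
/- Let n ≥ 3 and let F_1, F_2, …, F_{2^{n−1}}, F_{2^{n−1}+1} be a partition path in Q_n, i.e., each F_i ⊆ V(Q_n) has |F_i| = 2^{n−1}, F_{2^{n−1}+1} = V(Q_n) \ F_1, consecutive sets satisfy |F_i Δ F_{i+1}| = 2, and the sets F_1, …, F_{2^{n−1}} are pairwise distinct. Then there exist at least two indices i with 1 ≤ i ≤ 2^{n−1} such that Type(F_i) ≥ 2^{n−3}. -/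
open Finset

namespace PPaux
variable {n : ℕ}

lemma flip_flip (k : Fin n) (x : Fin n → Bool) :
    Function.update (Function.update x k (!(x k))) k (!((Function.update x k (!(x k))) k)) = x := by
  funext j
  rcases eq_or_ne j k with rfl | h
  · simp
  · simp [Function.update_of_ne h]

lemma card_filter_flip (k : Fin n) (P : (Fin n → Bool) → Prop) [DecidablePred P] :
    (univ.filter P).card = (univ.filter (fun x => P (Function.update x k (!(x k))))).card := by
  apply Finset.card_bij' (fun x _ => Function.update x k (!(x k)))
    (fun x _ => Function.update x k (!(x k)))
  · intro x _; exact flip_flip k x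
  · intro x _; exact flip_flip k x
  · intro x hx
    simp only [Finset.mem_filter, Finset.mem_univ, true_and] at hx ⊢
    rw [flip_flip k x]; exact hx
  · intro x hx
    simp only [Finset.mem_filter, Finset.mem_univ, true_and] at hx ⊢
    exact hx

lemma inter_hp (S : Finset (Fin n → Bool)) (i : Fin n) (a : Bool) :
    S ∩ halfPlane n i a = S.filter (fun x => x i = a) := by
  ext x; simp [halfPlane, Finset.mem_filter, Finset.mem_inter]

lemma filter_split (s : Finset (Fin n → Bool)) (i : Fin n) (a : Bool)
    (p : (Fin n → Bool) → Prop) [DecidablePred p] :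
    (s.filter (fun x => p x ∧ x i = a)).card + (s.filter (fun x => p x ∧ x i = !a)).card
      = (s.filter p).card := by
  have h1 : s.filter (fun x => p x ∧ x i = a) = (s.filter p).filter (fun x => x i = a) := by
    rw [Finset.filter_filter]
  have h2 : s.filter (fun x => p x ∧ x i = !a) = (s.filter p).filter (fun x => ¬ (x i = a)) := by
    rw [Finset.filter_filter]
    apply Finset.filter_congr; intro x _
    cases (x i) <;> cases a <;> simp
  rw [h1, h2]
  exact Finset.card_filter_add_card_filter_not _

lemma hp_split (S : Finset (Fin n → Bool)) (i : Fin n) (a : Bool) :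
    (S ∩ halfPlane n i a).card + (S ∩ halfPlane n i (!a)).card = S.card := by
  rw [inter_hp, inter_hp]
  have h2 : S.filter (fun x => x i = !a) = S.filter (fun x => ¬ (x i = a)) := by
    apply Finset.filter_congr; intro x _
    cases (x i) <;> cases a <;> simp
  rw [h2]
  exact Finset.card_filter_add_card_filter_not _

lemma hp_card (hn : 1 ≤ n) (i : Fin n) (a : Bool) : (halfPlane n i a).card = 2^(n-1) := by
  have flip : (univ.filter (fun x : Fin n → Bool => x i = a)).card
      = (univ.filter (fun x : Fin n → Bool => x i = !a)).card := by
    rw [card_filter_flip i (fun x => x i = a)]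
    congr 1
    apply Finset.filter_congr; intro x _
    simp only [Function.update_self]
    cases (x i) <;> cases a <;> simp
  have split : (univ.filter (fun x : Fin n → Bool => x i = a)).card
      + (univ.filter (fun x : Fin n → Bool => x i = !a)).card = 2^n := by
    have h := hp_split (univ : Finset (Fin n → Bool)) i a
    rw [inter_hp, inter_hp] at h
    simpa [Finset.card_univ] using h
  have hpow : 2^n = 2 * 2^(n-1) := by
    conv_lhs => rw [← Nat.sub_add_cancel hn]
    rw [pow_succ']
  unfold halfPlane
  linarith

lemma quarter_card (hn : 2 ≤ n) (i i' : Fin n) (h : i ≠ i') (a a' : Bool) :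
    (univ.filter (fun x : Fin n → Bool => x i = a ∧ x i' = a')).card = 2^(n-2) := by
  have flip : ∀ b b' : Bool, (univ.filter (fun x : Fin n → Bool => x i = b ∧ x i' = b')).card
      = (univ.filter (fun x : Fin n → Bool => x i = b ∧ x i' = !b')).card := by
    intro b b'
    rw [card_filter_flip i' (fun x => x i = b ∧ x i' = b')]
    congr 1
    apply Finset.filter_congr; intro x _
    simp only [Function.update_self, Function.update_of_ne h]
    cases (x i') <;> cases b' <;> simp
  have split := filter_split (univ : Finset (Fin n → Bool)) i' a' (fun x => x i = a)
  have hhp : (univ.filter (fun x : Fin n → Bool => x i = a)).card = 2^(n-1) := by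
    have := hp_card (le_trans one_le_two hn) i a
    unfold halfPlane at this; exact this
  have hf := flip a a'
  have hpow : 2^(n-1) = 2 * 2^(n-2) := by
    have h1 : n - 1 = (n-2) + 1 := by clear flip split hhp hf; omega
    rw [h1, pow_succ']
  linarith

lemma lemmaA (hn : 2 ≤ n) (S : Finset (Fin n → Bool)) (i i' : Fin n) (h : i ≠ i') (a a' : Bool) :
    (S ∩ halfPlane n i a).card + (S ∩ halfPlane n i' a').card ≤ S.card + 2^(n-2) := by
  have key := Finset.card_inter_add_card_union (S ∩ halfPlane n i a) (S ∩ halfPlane n i' a')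
  have h1 : (S ∩ halfPlane n i a) ∪ (S ∩ halfPlane n i' a') ⊆ S := by
    intro x hx; rcases Finset.mem_union.1 hx with hx | hx <;>
      exact (Finset.mem_inter.1 hx).1
  have h2 : (S ∩ halfPlane n i a) ∩ (S ∩ halfPlane n i' a')
      ⊆ univ.filter (fun x : Fin n → Bool => x i = a ∧ x i' = a') := by
    intro x hx
    simp only [Finset.mem_inter, halfPlane, Finset.mem_filter, Finset.mem_univ, true_and] at hx ⊢
    exact ⟨hx.1.2, hx.2.2⟩
  have c1 := Finset.card_le_card h1
  have c2 := Finset.card_le_card h2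
  rw [quarter_card hn i i' h a a'] at c2
  linarith

lemma step_bound {α : Type*} [DecidableEq α] (A B H : Finset α) :
    (B ∩ H).card ≤ (A ∩ H).card + (B \ A).card := by
  have hsub : B ∩ H ⊆ (A ∩ H) ∪ (B \ A) := by
    intro x hx
    rw [Finset.mem_inter] at hx
    by_cases h : x ∈ A
    · exact Finset.mem_union.2 (Or.inl (Finset.mem_inter.2 ⟨h, hx.2⟩))
    · exact Finset.mem_union.2 (Or.inr (Finset.mem_sdiff.2 ⟨hx.1, h⟩))
  calc (B ∩ H).card ≤ ((A ∩ H) ∪ (B \ A)).card := Finset.card_le_card hsub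
    _ ≤ (A ∩ H).card + (B \ A).card := Finset.card_union_le _ _

lemma sdiff_one {α : Type*} [DecidableEq α] (A B : Finset α) (hc : A.card = B.card)
    (h2 : ((A \ B) ∪ (B \ A)).card = 2) : (A \ B).card = 1 ∧ (B \ A).card = 1 := by
  have hd : ((A \ B) ∪ (B \ A)).card = (A \ B).card + (B \ A).card :=
    Finset.card_union_of_disjoint disjoint_sdiff_sdiff
  have he : (A \ B).card = (B \ A).card := Finset.card_sdiff_comm hc
  omega

end PPaux

/-- Along a partition path in `Q_n` there are at least two indices
`i ∈ {1,…,2^{n−1}}` whose set has type at least `2^{n−3}`. -/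


theorem partition_path_two_big_types (n : ℕ) (hn : 3 ≤ n)
    (F : ℕ → Finset (Fin n → Bool))
    (hcard : ∀ i, 1 ≤ i → i ≤ 2^(n-1) → (F i).card = 2^(n-1))
    (hend : F (2^(n-1) + 1) = Finset.univ \ F 1)
    (hstep : ∀ i, 1 ≤ i → i ≤ 2^(n-1) →
      ((F i \ F (i+1)) ∪ (F (i+1) \ F i)).card = 2)
    (hdistinct : ∀ i j, 1 ≤ i → i ≤ 2^(n-1) → 1 ≤ j → j ≤ 2^(n-1) →
      i ≠ j → F i ≠ F j) :
    ∃ i j, 1 ≤ i ∧ i ≤ 2^(n-1) ∧ 1 ≤ j ∧ j ≤ 2^(n-1) ∧ i ≠ j ∧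
      typeOf n (F i) ≥ 2^(n-3) ∧ typeOf n (F j) ≥ 2^(n-3) := by
  classical
  by_contra hcon
  obtain ⟨d, hd⟩ : ∃ d : ℕ → Fin n → Bool → ℕ,
      ∀ j i a, d j i a = ((F j) ∩ halfPlane n i a).card := ⟨_, fun _ _ _ => rfl⟩
  obtain ⟨T, hT⟩ : ∃ T, T = 2^(n-3) := ⟨_, rfl⟩
  obtain ⟨L, hL⟩ : ∃ L, L = 2^(n-1) := ⟨_, rfl⟩
  have hT1 : 1 ≤ T := hT ▸ Nat.one_le_two_pow
  have hL4 : L = 4 * T := by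
    rw [hL, hT, show n - 1 = (n-3) + 2 by omega, pow_add]; ring
  have h2n2 : 2^(n-2) = 2 * T := by
    rw [hT, show n - 2 = (n-3)+1 by omega, pow_succ']
  have cardF : ∀ j, 1 ≤ j → j ≤ L + 1 → (F j).card = 4 * T := by
    intro j h1 h2
    rcases Nat.lt_or_ge j (L+1) with h | h
    · rw [← hL4, hL]; exact hcard j h1 (by omega)
    · have hj : j = L + 1 := by omega
      subst hj
      have he : F (L + 1) = univ \ F 1 := by rw [hL]; exact hend
      rw [he, Finset.card_sdiff_of_subset (Finset.subset_univ _)]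
      have hu : (univ : Finset (Fin n → Bool)).card = 2^n := by
        simp [Finset.card_univ]
      have hF1 : (F 1).card = 2^(n-1) := hcard 1 (le_refl _) Nat.one_le_two_pow
      rw [hu, hF1]
      have hp2 : 2^n = 2*2^(n-1) := by
        conv_lhs => rw [← Nat.sub_add_cancel (show 1 ≤ n by omega)]
        rw [pow_succ']
      rw [← hL4, hL]
      omega
  have hsum : ∀ j, 1 ≤ j → j ≤ L+1 → ∀ (i : Fin n) (a : Bool),
      d j i a + d j i (!a) = 4*T := by
    intro j h1 h2 i a
    rw [hd, hd, PPaux.hp_split (F j) i a]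
    exact cardF j h1 h2
  have hAA : ∀ j, 1 ≤ j → j ≤ L+1 → ∀ (i i' : Fin n) (a a' : Bool), i ≠ i' →
      d j i a + d j i' a' ≤ 6*T := by
    intro j h1 h2 i i' a a' hne
    rw [hd, hd]
    have h := PPaux.lemmaA (show 2 ≤ n by omega) (F j) i i' hne a a'
    rw [cardF j h1 h2, h2n2] at h
    omega
  have dstep : ∀ j, 1 ≤ j → j ≤ L → ∀ (i : Fin n) (a : Bool),
      d (j+1) i a ≤ d j i a + 1 ∧ d j i a ≤ d (j+1) i a + 1 := by
    intro j h1 h2 i a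
    have hcA : (F j).card = 4*T := cardF j h1 (by omega)
    have hcB : (F (j+1)).card = 4*T := cardF (j+1) (by omega) (by omega)
    have hs := hstep j h1 (by rw [← hL]; exact h2)
    obtain ⟨ha, hb⟩ := PPaux.sdiff_one (F j) (F (j+1)) (hcA.trans hcB.symm) hs
    constructor
    · rw [hd, hd]
      have h := PPaux.step_bound (F j) (F (j+1)) (halfPlane n i a)
      omega
    · rw [hd, hd]
      have h := PPaux.step_bound (F (j+1)) (F j) (halfPlane n i a)
      omega
  have hendd : ∀ (i : Fin n) (a : Bool), d (L+1) i a + d 1 i a = 4*T := by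
    intro i a
    rw [hd, hd]
    have he : F (L+1) = univ \ F 1 := by rw [hL]; exact hend
    rw [he]
    have h1 : (univ \ F 1) ∩ halfPlane n i a = halfPlane n i a \ F 1 := by
      ext x
      simp only [Finset.mem_inter, Finset.mem_sdiff, Finset.mem_univ, true_and]
      tauto
    rw [h1]
    have h2 := Finset.card_sdiff_add_card_inter (halfPlane n i a) (F 1)
    rw [Finset.inter_comm] at h2
    have h4 : (halfPlane n i a).card = 4*T := by
      rw [PPaux.hp_card (show 1 ≤ n by omega) i a, ← hL, hL4]
    omega
  obtain ⟨Good, hGood⟩ : ∃ G : ℕ → Prop, ∀ j, G j ↔ ∀ (i : Fin n) (a : Bool), T ≤ d j i a :=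
    ⟨_, fun _ => Iff.rfl⟩
  have badW : ∀ j, 1 ≤ j → j ≤ L+1 → ¬ Good j → ∃ (i : Fin n) (a : Bool),
      3*T+1 ≤ d j i a := by
    intro j h1 h2 hng
    rw [hGood] at hng
    push_neg at hng
    obtain ⟨i, a, hlt⟩ := hng
    refine ⟨i, !a, ?_⟩
    have hs := hsum j h1 h2 i a
    omega
  have goodEnd : Good (L+1) ↔ Good 1 := by
    constructor
    · intro h
      rw [hGood] at h ⊢
      intro i a
      have e := hendd i a
      have s := hsum (L+1) (by omega) (le_refl _) i a
      have hb := h i (!a)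
      omega
    · intro h
      rw [hGood] at h ⊢
      intro i a
      have e := hendd i a
      have s := hsum 1 (by omega) (by omega) i a
      have hb := h i (!a)
      omega
  have goodType : ∀ j, Good j → 2^(n-3) ≤ typeOf n (F j) := by
    intro j hj
    have hne : {m | ∃ (i : Fin n) (a : Bool), ((F j) ∩ halfPlane n i a).card = m}.Nonempty :=
      ⟨((F j) ∩ halfPlane n ⟨0, by omega⟩ true).card, ⟨⟨0, by omega⟩, true, rfl⟩⟩
    obtain ⟨i, a, hia⟩ := Nat.sInf_mem hne
    unfold typeOf
    rw [← hia, ← hd, ← hT]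
    exact (hGood j).1 hj i a
  have key : ∀ j1 j2, 1 ≤ j1 → j1 ≤ L → 1 ≤ j2 → j2 ≤ L → Good j1 → Good j2 → j1 = j2 := by
    intro j1 j2 h1 h2 h3 h4 hg1 hg2
    by_contra hne
    exact hcon ⟨j1, j2, h1, by omega, h3, by omega, hne, goodType j1 hg1, goodType j2 hg2⟩
  have run : ∀ m' m, 1 ≤ m → m ≤ m' → m' ≤ L + 1 →
      (∀ j, m ≤ j → j ≤ m' → ¬ Good j) →
      ∃ (i : Fin n) (a : Bool), ∀ j, m ≤ j → j ≤ m' → 3*T+1 ≤ d j i a := by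
    intro m'
    induction m' with
    | zero => intro m h1 h2 _ _; exact absurd h2 (by omega)
    | succ mp ih =>
      intro m h1 h2 h3 hbad
      rcases Nat.lt_or_ge m (mp+1) with hlt | hge
      · obtain ⟨i, a, hw⟩ := ih m h1 (by omega) (by omega)
          (fun j hj1 hj2 => hbad j hj1 (by omega))
        obtain ⟨i', a', hw'⟩ := badW (mp+1) (by omega) h3 (hbad (mp+1) (by omega) (le_refl _))
        have hst := (dstep mp (by omega) (by omega) i a).2
        have hmp := hw mp (by omega) (le_refl _)
        have hii : i = i' := by
          by_contra hne
          have h := hAA (mp+1) (by omega) h3 i i' a a' hne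
          omega
        subst hii
        have haa : a = a' := by
          by_contra hne
          have hba : a' = !a := by revert hne; cases a <;> cases a' <;> decide
          subst hba
          have hs := hsum (mp+1) (by omega) h3 i a
          omega
        subst haa
        refine ⟨i, a, fun j hj1 hj2 => ?_⟩
        rcases Nat.lt_or_ge j (mp+1) with h | h
        · exact hw j hj1 (by omega)
        · have hje : j = mp+1 := by omega
          subst hje; exact hw'
      · have hme : m = mp + 1 := by omega
        subst hme
        obtain ⟨i, a, hw⟩ := badW (mp+1) h1 h3 (hbad _ (le_refl _) (le_refl _))
        refine ⟨i, a, fun j hj1 hj2 => ?_⟩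
        have hje : j = mp+1 := by omega
        subst hje; exact hw
  by_cases hg : ∃ g, 1 ≤ g ∧ g ≤ L ∧ Good g
  · obtain ⟨g, hg1, hgL, hgood⟩ := hg
    by_cases hone : g = 1
    · subst hone
      have hgoodE : Good (L+1) := goodEnd.2 hgood
      have hbadrun : ∀ j, 2 ≤ j → j ≤ L → ¬ Good j := by
        intro j h1 h2 hGj
        have h := key j 1 (by omega) h2 (by omega) (by omega) hGj hgood
        omega
      obtain ⟨i, a, hw⟩ := run L 2 (by omega) (by omega) (by omega) hbadrun
      have s1 : d 2 i a ≤ d 1 i a + 1 := (dstep 1 (by omega) (by omega) i a).1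
      have s2 := (dstep L (by omega) (le_refl _) i a).2
      have e := hendd i a
      have w2 := hw 2 (le_refl _) (by omega)
      have wL := hw L (by omega) (le_refl _)
      omega
    · have hng1 : ¬ Good 1 := fun h => hone (key g 1 hg1 hgL (by omega) (by omega) hgood h)
      have hngE : ¬ Good (L+1) := fun h => hng1 (goodEnd.1 h)
      have hbr1 : ∀ j, 1 ≤ j → j ≤ g-1 → ¬ Good j := by
        intro j h1 h2 hGj
        have h := key j g h1 (by omega) hg1 hgL hGj hgood
        omega
      have hbr2 : ∀ j, g+1 ≤ j → j ≤ L+1 → ¬ Good j := by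
        intro j h1 h2 hGj
        rcases Nat.lt_or_ge j (L+1) with h | h
        · have h' := key j g (by omega) (by omega) hg1 hgL hGj hgood
          omega
        · have hje : j = L+1 := by omega
          subst hje; exact hngE hGj
      obtain ⟨i, a, hw1⟩ := run (g-1) 1 (le_refl _) (by omega) (by omega) hbr1
      obtain ⟨i', a', hw2⟩ := run (L+1) (g+1) (by omega) (by omega) (le_refl _) hbr2
      have hwE := hw2 (L+1) (by omega) (le_refl _)
      have hw11 := hw1 1 (le_refl _) (by omega)
      have e' := hendd i' a'
      by_cases hii : i = i'
      · subst hii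
        by_cases haa : a = a'
        · subst haa; omega
        · have hba : a' = !a := by revert haa; cases a <;> cases a' <;> decide
          subst hba
          have hg1m := hw1 (g-1) (by omega) (le_refl _)
          have hsm := hsum (g-1) (by omega) (by omega) i a
          have st1 := (dstep (g-1) (by omega) (by omega) i (!a)).1
          have hgg : g - 1 + 1 = g := by omega
          rw [hgg] at st1
          have st2 := (dstep g hg1 hgL i (!a)).1
          have hw2g := hw2 (g+1) (le_refl _) (by omega)
          omega
      · have hs1 := hsum 1 (by omega) (by omega) i' a'
        have hA1 := hAA 1 (by omega) (by omega) i i' a (!a') hii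
        omega
  · push_neg at hg
    have hband : ∀ j, 1 ≤ j → j ≤ L+1 → ¬ Good j := by
      intro j h1 h2 hGj
      rcases Nat.lt_or_ge j (L+1) with h | h
      · exact hg j h1 (by omega) hGj
      · have hje : j = L+1 := by omega
        subst hje
        exact hg 1 (le_refl _) (by omega) (goodEnd.1 hGj)
    obtain ⟨i, a, hw⟩ := run (L+1) 1 (le_refl _) (by omega) (le_refl _) hband
    have e := hendd i a
    have w1 := hw 1 (le_refl _) (by omega)
    have w2 := hw (L+1) (by omega) (le_refl _)
    omega
end

section
/- For every integer n ≥ 1 and every integer k with 0 ≤ k ≤ 2^{n−1}, (2k+1)·θ(n,k) ≥ 2·Σ_{i=0}^{k} θ(n,i). -/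
open Finset

/-
Every vertex of `Q_n` has degree `n`, so `θ(n,S) = n|S| - 2e(S)` where `e(S)` is the number of
edges inside `S`. Harper's theorem says `e(S) ≤ h(|S|)` with `h(m) = Σ_{i<m} s₂(i)` (`maxEdges`),
with equality for initial segments of the binary order; hence `θ(n,m) = nm - 2h(m)`. The bound on
`e(S)` follows by induction on `n`, splitting `Q_{n+1}` into two copies of `Q_n`: the matching
edges between the halves number at most `min(a,b)`, and Hart's inequality
`h(a) + h(b) + min(a,b) ≤ h(a+b)` closes the induction.

With this formula the theorem becomes `(4k+2)h(k) ≤ nk² + 4Σ_{i≤k} h(i)`, proved in the stronger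
form `(4k+2)h(k) + k ≤ (⌈log₂ k⌉ + 1)k² + 4Σ_{i≤k} h(i)` by induction along
`h(2m) = 2h(m) + m` and `h(2m+1) = h(m) + h(m+1) + m`.
-/

def maxEdges : ℕ → ℕ
  | 0 => 0
  | 1 => 0
  | m + 2 => maxEdges ((m + 3) / 2) + maxEdges ((m + 2) / 2) + (m + 2) / 2

@[simp] lemma maxEdges_zero : maxEdges 0 = 0 := by rw [maxEdges]

@[simp] lemma maxEdges_one : maxEdges 1 = 0 := by rw [maxEdges]

lemma maxEdges_eq (m : ℕ) :
    maxEdges m = maxEdges ((m + 1) / 2) + maxEdges (m / 2) + m / 2 := by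
  match m with
  | 0 | 1 => simp
  | m + 2 => rw [maxEdges]

lemma maxEdges_two_mul (m : ℕ) : maxEdges (2 * m) = 2 * maxEdges m + m := by
  rw [maxEdges_eq, show (2 * m + 1) / 2 = m by omega, show 2 * m / 2 = m by omega]
  ring

lemma maxEdges_two_mul_add_one (m : ℕ) :
    maxEdges (2 * m + 1) = maxEdges (m + 1) + maxEdges m + m := by
  rw [maxEdges_eq, show (2 * m + 1 + 1) / 2 = m + 1 by omega, show (2 * m + 1) / 2 = m by omega]

theorem maxEdges_add_le (a b : ℕ) : maxEdges a + maxEdges b + min a b ≤ maxEdges (a + b) := by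
  induction h : a + b using Nat.strong_induction_on generalizing a b with
  | _ s ih =>
    subst h
    rcases Nat.eq_zero_or_pos a with rfl | ha
    · simp
    rcases Nat.eq_zero_or_pos b with rfl | hb
    · simp
    obtain ⟨a, rfl | rfl⟩ := Nat.even_or_odd' a <;> obtain ⟨b, rfl | rfl⟩ := Nat.even_or_odd' b
    · have := ih (a + b) (by omega) a b rfl
      rw [show 2 * a + 2 * b = 2 * (a + b) by ring]
      simp only [maxEdges_two_mul]
      omega
    · have h1 := ih (a + b) (by omega) a b rfl
      have h2 := ih (a + b + 1) (by omega) a (b + 1) (by ring)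
      rw [show 2 * a + (2 * b + 1) = 2 * (a + b) + 1 by ring]
      simp only [maxEdges_two_mul, maxEdges_two_mul_add_one]
      omega
    · have h1 := ih (a + b) (by omega) a b rfl
      have h2 := ih (a + b + 1) (by omega) (a + 1) b (by ring)
      rw [show 2 * a + 1 + 2 * b = 2 * (a + b) + 1 by ring]
      simp only [maxEdges_two_mul, maxEdges_two_mul_add_one]
      omega
    · have h1 := ih (a + b + 1) (by omega) a (b + 1) (by ring)
      have h2 := ih (a + b + 1) (by omega) (a + 1) b (by ring)
      rw [show 2 * a + 1 + (2 * b + 1) = 2 * (a + b + 1) by ring]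
      simp only [maxEdges_two_mul, maxEdges_two_mul_add_one]
      omega

lemma maxEdges_le_succ (m : ℕ) : maxEdges m ≤ maxEdges (m + 1) := by
  have := maxEdges_add_le m 1
  omega

lemma sum_maxEdges_two_mul (m : ℕ) :
    ∑ i ∈ range (2 * m + 1), maxEdges i + maxEdges m =
      4 * ∑ i ∈ range (m + 1), maxEdges i + m ^ 2 := by
  induction m with
  | zero => simp
  | succ m ih =>
    rw [show 2 * (m + 1) + 1 = 2 * m + 1 + 1 + 1 by ring, sum_range_succ, sum_range_succ,
      sum_range_succ _ (m + 1), show 2 * m + 1 + 1 = 2 * (m + 1) by ring,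
      maxEdges_two_mul, maxEdges_two_mul_add_one]
    linarith

lemma sum_maxEdges_two_mul_add_one (m : ℕ) :
    ∑ i ∈ range (2 * m + 2), maxEdges i =
      4 * ∑ i ∈ range (m + 1), maxEdges i + m ^ 2 + m + maxEdges (m + 1) := by
  have := sum_maxEdges_two_mul m
  rw [sum_range_succ, maxEdges_two_mul_add_one]
  omega

theorem maxEdges_mul_le (k : ℕ) :
    (4 * k + 2) * maxEdges k + k ≤
      (Nat.clog 2 k + 1) * k ^ 2 + 4 * ∑ i ∈ range (k + 1), maxEdges i := by
  induction k using Nat.strong_induction_on with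
  | _ k ih =>
    obtain ⟨m, rfl | rfl⟩ := Nat.even_or_odd' k
    · rcases Nat.eq_zero_or_pos m with rfl | hm
      · simp
      have H := ih m (by omega)
      have hsum := sum_maxEdges_two_mul m
      rw [Nat.clog_of_two_le one_lt_two (by omega), show (2 * m + 2 - 1) / 2 = m by omega,
        maxEdges_two_mul]
      linarith
    · rcases Nat.eq_zero_or_pos m with rfl | hm
      · simp [sum_range_succ]
      set c := Nat.clog 2 (m + 1)
      have Hm : (4 * m + 2) * maxEdges m + m ≤
          (c + 1) * m ^ 2 + 4 * ∑ i ∈ range (m + 1), maxEdges i :=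
        (ih m (by omega)).trans (by gcongr; exact Nat.clog_mono_right 2 (by omega))
      have Hm1 := ih (m + 1) (by omega)
      have hc : c ≤ m + 1 := Nat.clog_le_of_le_pow Nat.lt_two_pow_self.le
      have hmono := maxEdges_le_succ m
      have hsum := sum_maxEdges_two_mul_add_one m
      rw [sum_range_succ _ (m + 1)] at Hm1
      rw [Nat.clog_of_two_le one_lt_two (by omega), show (2 * m + 1 + 2 - 1) / 2 = m + 1 by omega,
        maxEdges_two_mul_add_one, hsum]
      linarith

section Cube

variable {n : ℕ}

lemma cubeEdge_iff_exists_update {u v : Fin n → Bool} :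
    cubeEdge u v ↔ ∃ i, v = Function.update u i (!u i) := by
  simp only [cubeEdge, card_eq_one, eq_singleton_iff_unique_mem, mem_filter, mem_univ, true_and]
  refine exists_congr fun i => ⟨fun ⟨hi, h⟩ => funext fun j => ?_, ?_⟩
  · by_cases hj : j = i
    · subst hj
      cases hu : u j <;> cases hv : v j <;> simp_all
    · rw [Function.update_of_ne hj]
      exact not_not.1 (mt (h j) hj) |>.symm
  · rintro rfl
    refine ⟨by simp, fun j hj => ?_⟩
    by_contra hji
    simp [Function.update_of_ne hji] at hj

lemma card_filter_cubeEdge (u : Fin n → Bool) : (univ.filter (cubeEdge u)).card = n := by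
  have hinj : Function.Injective fun i => Function.update u i (!u i) := by
    intro i j h
    by_contra hij
    simpa [Function.update_of_ne hij] using congrFun h i
  have himage : univ.filter (cubeEdge u) = univ.image fun i => Function.update u i (!u i) := by
    ext v
    simp [cubeEdge_iff_exists_update, eq_comm]
  rw [himage, card_image_of_injective _ hinj, card_univ, Fintype.card_fin]

lemma cubeEdge_cons {a b : Bool} {x y : Fin n → Bool} :
    cubeEdge (Fin.cons a x : Fin (n + 1) → Bool) (Fin.cons b y) ↔
      a = b ∧ cubeEdge x y ∨ a ≠ b ∧ x = y := by
  have hcard : (univ.filter fun i =>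
        (Fin.cons a x : Fin (n + 1) → Bool) i ≠ (Fin.cons b y : Fin (n + 1) → Bool) i).card =
      (if a = b then 0 else 1) + (univ.filter fun i => x i ≠ y i).card := by
    rw [card_filter, Fin.sum_univ_succ, ← card_filter]
    simp only [Fin.cons_zero, Fin.cons_succ]
    split_ifs <;> simp_all
  unfold cubeEdge
  rw [hcard]
  split_ifs with hab
  · simp [hab]
  · simp [hab, card_eq_zero, filter_eq_empty_iff, funext_iff]

def innerEdgePairs (n : ℕ) (S : Finset (Fin n → Bool)) : ℕ :=
  (univ.filter fun p : (Fin n → Bool) × (Fin n → Bool) =>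
    p.1 ∈ S ∧ p.2 ∈ S ∧ cubeEdge p.1 p.2).card

lemma edgeBoundary_add_innerEdgePairs (S : Finset (Fin n → Bool)) :
    edgeBoundary n S + innerEdgePairs n S = n * S.card := by
  calc edgeBoundary n S + innerEdgePairs n S
      = (univ.filter fun p : (Fin n → Bool) × (Fin n → Bool) =>
          p.1 ∈ S ∧ cubeEdge p.1 p.2).card := by
        rw [edgeBoundary, innerEdgePairs, ← card_union_of_disjoint]
        · congr 1
          ext p
          simp only [mem_union, mem_filter, mem_univ, true_and]
          tauto
        · exact disjoint_filter.2 fun p _ h1 h2 => h1.2.1 h2.2.1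
    _ = ∑ u ∈ S, (univ.filter (cubeEdge u)).card := by
        simp only [card_filter, Fintype.sum_prod_type, ite_and, sum_ite_irrel, sum_const_zero,
          Fintype.sum_ite_mem]
    _ = n * S.card := by simp [card_filter_cubeEdge, mul_comm]

lemma innerEdgePairs_le_mul_card (S : Finset (Fin n → Bool)) :
    innerEdgePairs n S ≤ n * S.card := by
  have := edgeBoundary_add_innerEdgePairs S
  omega

def cubeSlice (S : Finset (Fin (n + 1) → Bool)) (b : Bool) : Finset (Fin n → Bool) :=
  univ.filter fun x => Fin.cons b x ∈ S

@[simp] lemma mem_cubeSlice {S : Finset (Fin (n + 1) → Bool)} {b : Bool} {x : Fin n → Bool} :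
    x ∈ cubeSlice S b ↔ Fin.cons b x ∈ S := by
  simp [cubeSlice]

lemma sum_eq_sum_sum_cons {M : Type*} [AddCommMonoid M] (f : (Fin (n + 1) → Bool) → M) :
    ∑ z, f z = ∑ b, ∑ x, f (Fin.cons b x) := by
  rw [← (Fin.consEquiv fun _ => Bool).sum_comp, Fintype.sum_prod_type]
  rfl

lemma card_cubeSlice_add_card_cubeSlice (S : Finset (Fin (n + 1) → Bool)) :
    (cubeSlice S false).card + (cubeSlice S true).card = S.card := by
  rw [add_comm, ← Fintype.sum_bool fun b => (cubeSlice S b).card, ← filter_univ_mem S, card_filter,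
    sum_eq_sum_sum_cons]
  simp only [cubeSlice, card_filter, mem_filter, mem_univ, true_and]

lemma innerEdgePairs_succ (S : Finset (Fin (n + 1) → Bool)) :
    innerEdgePairs (n + 1) S =
      innerEdgePairs n (cubeSlice S false) + innerEdgePairs n (cubeSlice S true) +
        2 * (cubeSlice S false ∩ cubeSlice S true).card := by
  have hsum : ∀ {m} (T : Finset (Fin m → Bool)), innerEdgePairs m T =
      ∑ x, ∑ y, if x ∈ T ∧ y ∈ T ∧ cubeEdge x y then 1 else 0 := by
    intro m T
    rw [innerEdgePairs, card_filter, Fintype.sum_prod_type]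
  have hcross : ∀ a b : Bool,
      (∑ x, ∑ y, if Fin.cons a x ∈ S ∧ Fin.cons b y ∈ S ∧ x = y then 1 else 0) =
        (cubeSlice S a ∩ cubeSlice S b).card := by
    intro a b
    rw [card_eq_sum_ones, ← Fintype.sum_ite_mem (cubeSlice S a ∩ cubeSlice S b)]
    refine sum_congr rfl fun x _ => ?_
    rw [Fintype.sum_eq_single x fun y hy => if_neg fun h => hy h.2.2.symm]
    simp
  simp_rw [hsum, sum_eq_sum_sum_cons (n := n), cubeEdge_cons, Fintype.sum_bool]
  simp only [Bool.true_eq_false, Bool.false_eq_true, true_and, false_and, ne_eq, not_true_eq_false,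
    not_false_eq_true, false_or, or_false, mem_cubeSlice, sum_add_distrib, hcross]
  rw [inter_comm]
  ring

theorem innerEdgePairs_le (S : Finset (Fin n → Bool)) :
    innerEdgePairs n S ≤ 2 * maxEdges S.card := by
  induction n with
  | zero => exact (innerEdgePairs_le_mul_card S).trans (by simp)
  | succ n ih =>
    rw [innerEdgePairs_succ, ← card_cubeSlice_add_card_cubeSlice]
    set S₀ := cubeSlice S false
    set S₁ := cubeSlice S true
    have hleft := card_le_card (inter_subset_left (s₁ := S₀) (s₂ := S₁))
    have hright := card_le_card (inter_subset_right (s₁ := S₀) (s₂ := S₁))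
    have hart := maxEdges_add_le S₀.card S₁.card
    have h₀ := ih S₀
    have h₁ := ih S₁
    omega

-- The first `m` vertices in the binary order that reads `x 0` as the least significant bit.
def initialSegment : (n : ℕ) → ℕ → Finset (Fin n → Bool)
  | 0, m => univ.filter fun _ => 0 < m
  | n + 1, m => univ.filter fun x =>
      Fin.tail x ∈ initialSegment n (if x 0 then m / 2 else (m + 1) / 2)

lemma cubeSlice_initialSegment (m : ℕ) (b : Bool) :
    cubeSlice (initialSegment (n + 1) m) b =
      initialSegment n (if b then m / 2 else (m + 1) / 2) := by
  ext x
  simp [initialSegment]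

lemma initialSegment_mono {m m' : ℕ} (h : m ≤ m') : initialSegment n m ⊆ initialSegment n m' := by
  intro x
  induction n generalizing m m' with
  | zero =>
    simp only [initialSegment, mem_filter, mem_univ, true_and]
    omega
  | succ n ih =>
    simp only [initialSegment, mem_filter, mem_univ, true_and]
    apply ih
    split_ifs <;> omega

lemma card_initialSegment {m : ℕ} (h : m ≤ 2 ^ n) : (initialSegment n m).card = m := by
  induction n generalizing m with
  | zero =>
    interval_cases m <;> simp [initialSegment]
  | succ n ih =>
    rw [← card_cubeSlice_add_card_cubeSlice, cubeSlice_initialSegment, cubeSlice_initialSegment]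
    simp only [Bool.false_eq_true, if_false, if_true]
    rw [ih (by omega), ih (by omega)]
    omega

lemma innerEdgePairs_initialSegment {m : ℕ} (h : m ≤ 2 ^ n) :
    innerEdgePairs n (initialSegment n m) = 2 * maxEdges m := by
  induction n generalizing m with
  | zero =>
    have := innerEdgePairs_le_mul_card (initialSegment 0 m)
    interval_cases m <;> simp_all
  | succ n ih =>
    rw [innerEdgePairs_succ, cubeSlice_initialSegment, cubeSlice_initialSegment]
    simp only [Bool.false_eq_true, if_false, if_true]
    rw [ih (by omega), ih (by omega), inter_eq_right.2 (initialSegment_mono (by omega)),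
      card_initialSegment (by omega), maxEdges_eq m]
    ring

end Cube

theorem thetaMin_add_two_mul_maxEdges {n m : ℕ} (h : m ≤ 2 ^ n) :
    thetaMin n m + 2 * maxEdges m = n * m := by
  have hmem : thetaMin n m ∈
      {t | ∃ S : Finset (Fin n → Bool), S.card = m ∧ edgeBoundary n S = t} :=
    Nat.sInf_mem ⟨_, initialSegment n m, card_initialSegment h, rfl⟩
  obtain ⟨S, rfl, hS⟩ := hmem
  have hle : thetaMin n S.card ≤ edgeBoundary n (initialSegment n S.card) :=
    Nat.sInf_le ⟨_, card_initialSegment h, rfl⟩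
  have hsegment := edgeBoundary_add_innerEdgePairs (initialSegment n S.card)
  rw [card_initialSegment h, innerEdgePairs_initialSegment h] at hsegment
  have hS' := edgeBoundary_add_innerEdgePairs S
  have hpairs := innerEdgePairs_le S
  omega

/-- Guu, Theorem 13. For `0 ≤ k ≤ 2^{n−1}`,
`(2k+1)θ(n,k) ≥ 2 Σ_{i=0}^k θ(n,i)`. -/
theorem theta_partial_sum_bound (n k : ℕ) (hn : 1 ≤ n) (hk : k ≤ 2^(n-1)) :
    (2*k + 1) * thetaMin n k ≥ 2 * ∑ i ∈ Finset.range (k+1), thetaMin n i := by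
  have hk' : k ≤ 2 ^ n := hk.trans (Nat.pow_le_pow_right two_pos (Nat.sub_le n 1))
  have hθ := congrArg ((2 * k + 1) * ·) (thetaMin_add_two_mul_maxEdges hk')
  have hsum : ∑ i ∈ range (k + 1), (thetaMin n i + 2 * maxEdges i) = ∑ i ∈ range (k + 1), n * i :=
    sum_congr rfl fun i hi => thetaMin_add_two_mul_maxEdges (by rw [mem_range] at hi; omega)
  rw [sum_add_distrib, ← mul_sum, ← mul_sum] at hsum
  have hgauss : n * ((∑ i ∈ range (k + 1), i) * 2) = n * ((k + 1) * k) := by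
    rw [sum_range_id_mul_two, Nat.add_sub_cancel]
  have hclog : (Nat.clog 2 k + 1) * k ^ 2 ≤ n * k ^ 2 := by
    have := Nat.clog_le_of_le_pow hk
    gcongr
    omega
  have := maxEdges_mul_le k
  linarith
end
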